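/- arXiv:1803.00913 — 8 statements merged into one kernel-verified Lean document; each statement's English description precedes it below -/
import Mathlib

section
/- Let {A_i}_{i=1}^p be non-empty closed subsets of a complete G-metric space (X,G) and let T : ⋃_{i=1}^p A_i → ⋃_{i=1}^p A_i be a cyclical operator. Suppose there are an altering distance function φ, a function ψ as below, and constants α, γ with 0 ≤ γ < 1 and 0 < α + γ ≤ 1 such that for every i ∈ {1,…,p}, every x ∈ A_i and every y ∈ A_{i+1}, φ(G(Tx,Ty,Ty)) ≤ φ(α·G(x,Tx,Tx) + γ·G(y,Ty,Ty)) − ψ(G(x,Tx,Tx), G(y,Ty,Ty), G(y,Ty,Ty)). Then T has a unique fixed point u, and u ∈ ⋂_{i=1}^p A_i. -/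
open Fin.NatCast

/-- A sequence `s` in `X` `G`-converges to `x`: `lim_{n,m→∞} G(x, s n, s m) = 0`. -/
def GConvergesTo {X : Type*} (G : X → X → X → ℝ) (s : ℕ → X) (x : X) : Prop :=
  ∀ ε > 0, ∃ N : ℕ, ∀ n ≥ N, ∀ m ≥ N, G x (s n) (s m) < ε

/-- A sequence `s` in `X` is `G`-Cauchy: `lim_{n,m,ℓ→∞} G(s n, s m, s ℓ) = 0`. -/
def GCauchySeq {X : Type*} (G : X → X → X → ℝ) (s : ℕ → X) : Prop :=
  ∀ ε > 0, ∃ N : ℕ, ∀ n ≥ N, ∀ m ≥ N, ∀ l ≥ N, G (s n) (s m) (s l) < ε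

/-- `(X, G)` is a complete `G`-metric space: every `G`-Cauchy sequence `G`-converges. -/
def GComplete {X : Type*} (G : X → X → X → ℝ) : Prop :=
  ∀ s : ℕ → X, GCauchySeq G s → ∃ x : X, GConvergesTo G s x

/-- A subset `A` is closed: the `G`-limit of every `G`-convergent sequence of points
of `A` belongs to `A`. -/
def GClosed {X : Type*} (G : X → X → X → ℝ) (A : Set X) : Prop :=
  ∀ s : ℕ → X, (∀ n, s n ∈ A) → ∀ x : X, GConvergesTo G s x → x ∈ A

/-- `G : X × X × X → [0,∞)` is a generalized metric ("G-metric") on `X`. -/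
structure IsGMetric {X : Type*} (G : X → X → X → ℝ) : Prop where
  nonneg : ∀ x y z, 0 ≤ G x y z
  eq_zero : ∀ x, G x x x = 0
  pos_of_ne : ∀ x y, x ≠ y → 0 < G x x y
  le_of_ne : ∀ x y z, y ≠ z → G x x y ≤ G x y z
  symm_right : ∀ x y z, G x y z = G x z y
  symm_left : ∀ x y z, G x y z = G y x z
  rectangle : ∀ x y z a, G x y z ≤ G x a a + G a y z

/-- An altering distance function `φ : [0,∞) → [0,∞)`: continuous, nondecreasing,
and vanishing exactly at `0`. -/
structure IsAlteringDistance (φ : ℝ → ℝ) : Prop where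
  nonneg : ∀ t, 0 ≤ t → 0 ≤ φ t
  continuous : ContinuousOn φ (Set.Ici 0)
  mono : MonotoneOn φ (Set.Ici 0)
  eq_zero_iff : ∀ t, 0 ≤ t → (φ t = 0 ↔ t = 0)

/-- `ψ : [0,∞)³ → [0,∞)` continuous with `ψ(x,y,z) = 0 ↔ x = y = z = 0`. -/
structure IsPsiFun (ψ : ℝ → ℝ → ℝ → ℝ) : Prop where
  nonneg : ∀ x y z, 0 ≤ x → 0 ≤ y → 0 ≤ z → 0 ≤ ψ x y z
  continuous : ContinuousOn (fun q : ℝ × ℝ × ℝ => ψ q.1 q.2.1 q.2.2)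
    (Set.Ici 0 ×ˢ Set.Ici 0 ×ˢ Set.Ici 0)
  eq_zero_iff : ∀ x y z, 0 ≤ x → 0 ≤ y → 0 ≤ z →
    (ψ x y z = 0 ↔ x = 0 ∧ y = 0 ∧ z = 0)



private lemma gmet_xx_le {X : Type*} {G : X → X → X → ℝ} (hG : IsGMetric G) (a b : X) :
    G a a b ≤ 2 * G a b b := by
  have h1 := hG.rectangle a a b b
  have h2 := hG.symm_left b a b
  linarith

private lemma gmet_swap {X : Type*} {G : X → X → X → ℝ} (hG : IsGMetric G) (a b : X) :
    G a b b ≤ 2 * G b a a := by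
  have h1 : G a b b = G b b a := by rw [hG.symm_left a b b, hG.symm_right b a b]
  rw [h1]; exact gmet_xx_le hG b a

private lemma fin_cast_mod (p : ℕ) [NeZero p] (m : ℕ) : ((m % p : ℕ) : Fin p) = (m : Fin p) := by
  conv_rhs => rw [← Nat.mod_add_div m p]
  push_cast
  simp

set_option maxHeartbeats 2000000 in
theorem stmt_0 {X : Type*} (G : X → X → X → ℝ) (hG : IsGMetric G)
    (hcompl : GComplete G)
    (p : ℕ) [NeZero p] (A : Fin p → Set X)
    (hne : ∀ i, (A i).Nonempty) (hcl : ∀ i, GClosed G (A i))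
    (T : X → X) (hcyc : ∀ i : Fin p, ∀ x ∈ A i, T x ∈ A (i + 1))
    (φ : ℝ → ℝ) (ψ : ℝ → ℝ → ℝ → ℝ)
    (hφ : IsAlteringDistance φ) (hψ : IsPsiFun ψ)
    (α γ : ℝ) (hγ0 : 0 ≤ γ) (hγ1 : γ < 1) (hαγ0 : 0 < α + γ) (hαγ1 : α + γ ≤ 1)
    (hcontr : ∀ i : Fin p, ∀ x ∈ A i, ∀ y ∈ A (i + 1),
      φ (G (T x) (T y) (T y)) ≤
        φ (α * G x (T x) (T x) + γ * G y (T y) (T y)) -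
          ψ (G x (T x) (T x)) (G y (T y) (T y)) (G y (T y) (T y))) :
    ∃ u ∈ ⋂ i, A i, T u = u ∧ ∀ v ∈ ⋃ i, A i, T v = v → v = u := by
  classical
  obtain ⟨x0, hx0⟩ := hne 0
  have hp : 0 < p := Nat.pos_of_ne_zero (NeZero.ne p)
  set x : ℕ → X := fun n => T^[n] x0 with hxdef
  have hxs : ∀ n, x (n + 1) = T (x n) := fun n => Function.iterate_succ_apply' T n x0
  have memA : ∀ n : ℕ, x n ∈ A (n : Fin p) := by
    intro n
    induction n with
    | zero => simpa [hxdef] using hx0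
    | succ n ih =>
      have h := hcyc _ _ ih
      have hcast : ((n + 1 : ℕ) : Fin p) = (n : Fin p) + 1 := by push_cast; ring
      rw [hxs n, hcast]; exact h
  set d : ℕ → ℝ := fun n => G (x n) (x (n + 1)) (x (n + 1)) with hddef
  have dnn : ∀ n, 0 ≤ d n := fun n => hG.nonneg _ _ _
  have key : ∀ n m : ℕ, ((m : Fin p) = (n : Fin p) + 1) →
      φ (G (x (n + 1)) (x (m + 1)) (x (m + 1))) ≤
        φ (α * d n + γ * d m) - ψ (d n) (d m) (d m) := by
    intro n m h
    have h2 := memA m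
    rw [h] at h2
    have hc := hcontr (n : Fin p) (x n) (memA n) (x m) h2
    rw [← hxs n, ← hxs m] at hc
    exact hc
  have keystep : ∀ n : ℕ, φ (d (n + 1)) ≤
      φ (α * d n + γ * d (n + 1)) - ψ (d n) (d (n + 1)) (d (n + 1)) := by
    intro n
    have h := key n (n + 1) (by push_cast; ring)
    exact h
  -- d is nonincreasing
  have hdec : ∀ n, d (n + 1) ≤ d n := by
    intro n
    by_contra hlt
    push_neg at hlt
    have h0 : 0 ≤ d n := dnn n
    have h1 : 0 < d (n + 1) := lt_of_le_of_lt h0 hlt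
    have hψpos : 0 < ψ (d n) (d (n + 1)) (d (n + 1)) := by
      rcases (hψ.nonneg _ _ _ h0 h1.le h1.le).lt_or_eq with h | h
      · exact h
      · exfalso
        have := ((hψ.eq_zero_iff _ _ _ h0 h1.le h1.le).1 h.symm).2.1
        linarith
    have hk := keystep n
    rcases le_or_gt 0 (α * d n + γ * d (n + 1)) with hs0 | hs0
    · have hsle : α * d n + γ * d (n + 1) ≤ d (n + 1) := by
        rcases le_or_gt 0 α with h | h <;> nlinarith
      have := hφ.mono (Set.mem_Ici.2 hs0) (Set.mem_Ici.2 h1.le) hsle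
      linarith
    · have hα : α < 0 := by nlinarith
      have hγpos : 0 < γ := by linarith
      nlinarith
  have hant : Antitone d := antitone_nat_of_succ_le hdec
  have hbdd : BddBelow (Set.range d) := ⟨0, by rintro _ ⟨n, rfl⟩; exact dnn n⟩
  set r : ℝ := ⨅ n, d n with hrdef
  have hr0 : 0 ≤ r := le_ciInf dnn
  have hrle : ∀ n, r ≤ d n := fun n => ciInf_le hbdd n
  have hNlt : ∀ η > (0 : ℝ), ∃ N, ∀ n ≥ N, d n < r + η := by
    intro η hη
    obtain ⟨N, hN⟩ := exists_lt_of_ciInf_lt (show (⨅ n, d n) < r + η by rw [← hrdef]; linarith)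
    exact ⟨N, fun n hn => lt_of_le_of_lt (hant hn) hN⟩
  have hrzero : r = 0 := by
    by_contra hr
    have hrpos : 0 < r := hr0.lt_of_ne (Ne.symm hr)
    set c := ψ r r r with hcdef
    have hc : 0 < c := by
      rcases (hψ.nonneg r r r hr0 hr0 hr0).lt_or_eq with h | h
      · exact h
      · exact absurd ((hψ.eq_zero_iff r r r hr0 hr0 hr0).1 h.symm).1 hr
    obtain ⟨η₁, hη₁pos, hη₁⟩ :=
      Metric.continuousWithinAt_iff.1 (hφ.continuous r (Set.mem_Ici.2 hr0)) (c / 4) (by linarith)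
    obtain ⟨η₃, hη₃pos, hη₃⟩ :=
      Metric.continuousWithinAt_iff.1
        (hψ.continuous (r, r, r) ⟨Set.mem_Ici.2 hr0, Set.mem_Ici.2 hr0, Set.mem_Ici.2 hr0⟩)
        (c / 2) (by linarith)
    set η := min (η₁ / 2) (min (η₃ / 2) ((α + γ) * r / (2 * (|α| + 1)))) with hηdef
    have habs : (0:ℝ) < |α| + 1 := by positivity
    have hηpos : 0 < η := by
      apply lt_min (by linarith)
      apply lt_min (by linarith)
      positivity
    have hηle1 : η ≤ η₁ / 2 := min_le_left _ _
    have hηle3 : η ≤ η₃ / 2 := le_trans (min_le_right _ _) (min_le_left _ _)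
    have hηleα' : η ≤ (α + γ) * r / (2 * (|α| + 1)) :=
      le_trans (min_le_right _ _) (min_le_right _ _)
    have hηleα : η * (|α| + 1) ≤ (α + γ) * r / 2 := by
      calc η * (|α| + 1) ≤ ((α + γ) * r / (2 * (|α| + 1))) * (|α| + 1) :=
            mul_le_mul_of_nonneg_right hηleα' (by positivity)
        _ = (α + γ) * r / 2 := by field_simp
    obtain ⟨N, hNd⟩ := hNlt η hηpos
    have hu := hNd N le_rfl
    have hv := hNd (N + 1) (Nat.le_succ N)
    have hvu : d (N + 1) ≤ d N := hdec N
    have hru : r ≤ d N := hrle N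
    have hrv : r ≤ d (N + 1) := hrle (N + 1)
    set u := d N
    set v := d (N + 1)
    have hs0 : 0 ≤ α * u + γ * v := by
      rcases le_or_gt 0 α with h | h
      · have := dnn N; have := dnn (N+1); positivity
      · have hαabs : |α| = -α := abs_of_neg h
        nlinarith
    have hs1 : α * u + γ * v ≤ r + η := by
      rcases le_or_gt 0 α with h | h <;> nlinarith
    have hφs : φ (α * u + γ * v) ≤ φ (r + η) :=
      hφ.mono (Set.mem_Ici.2 hs0) (Set.mem_Ici.2 (by linarith)) hs1
    have hφrη : φ (r + η) < φ r + c / 4 := by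
      have := hη₁ (Set.mem_Ici.2 (by linarith : (0:ℝ) ≤ r + η))
        (by rw [Real.dist_eq]; rw [abs_of_pos (by linarith : (0:ℝ) < r + η - r)]; linarith)
      rw [Real.dist_eq] at this
      have := abs_lt.1 this
      linarith [this.2]
    have hψlb : c / 2 < ψ u v v := by
      have hmem : ((u, v, v) : ℝ × ℝ × ℝ) ∈ Set.Ici (0:ℝ) ×ˢ Set.Ici (0:ℝ) ×ˢ Set.Ici (0:ℝ) :=
        ⟨Set.mem_Ici.2 (dnn N), Set.mem_Ici.2 (dnn (N+1)), Set.mem_Ici.2 (dnn (N+1))⟩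
      have hdist : dist ((u, v, v) : ℝ × ℝ × ℝ) ((r, r, r) : ℝ × ℝ × ℝ) < η₃ := by
        rw [Prod.dist_eq, Prod.dist_eq]
        apply max_lt
        · rw [Real.dist_eq, abs_of_nonneg (by linarith)]; linarith
        · apply max_lt <;> (rw [Real.dist_eq, abs_of_nonneg (by linarith)]; linarith)
      have := hη₃ hmem hdist
      rw [Real.dist_eq] at this
      have := abs_lt.1 this
      simp only at this
      linarith [this.1]
    have hφv : φ r ≤ φ v := hφ.mono (Set.mem_Ici.2 hr0) (Set.mem_Ici.2 (dnn (N+1))) hrv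
    have hk := keystep N
    linarith
  have hd0 : ∀ δ > (0:ℝ), ∃ N, ∀ n ≥ N, d n < δ := by
    intro δ hδ
    obtain ⟨N, hN⟩ := hNlt δ hδ
    exact ⟨N, fun n hn => by have := hN n hn; rw [hrzero] at this; linarith⟩
  -- the orbit is G-Cauchy
  have hpair : ∀ ε > (0:ℝ), ∃ N, ∀ n ≥ N, ∀ m ≥ N, G (x n) (x m) (x m) < ε := by
    by_contra hcon
    push_neg at hcon
    obtain ⟨ε, hε, hbad⟩ := hcon
    have hφε : 0 < φ (ε / 4) := by
      rcases (hφ.nonneg (ε/4) (by linarith)).lt_or_eq with h | h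
      · exact h
      · exfalso
        have := (hφ.eq_zero_iff (ε/4) (by linarith)).1 h.symm
        linarith
    obtain ⟨δ₀, hδ₀pos, hδ₀⟩ :=
      Metric.continuousWithinAt_iff.1 (hφ.continuous 0 (Set.mem_Ici.2 le_rfl)) (φ (ε/4)) hφε
    have habs : (0:ℝ) < |α| + 1 := by positivity
    have hppos : (0:ℝ) < (p:ℝ) + 1 := by positivity
    set δ := min (ε / (16 * ((p:ℝ) + 1))) (δ₀ / (2 * (|α| + 1))) with hδdef
    have hδpos : 0 < δ := lt_min (by positivity) (by positivity)
    have hδ1 : δ * (16 * ((p:ℝ) + 1)) ≤ ε := by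
      have : δ ≤ ε / (16 * ((p:ℝ) + 1)) := min_le_left _ _
      calc δ * (16 * ((p:ℝ) + 1)) ≤ (ε / (16 * ((p:ℝ) + 1))) * (16 * ((p:ℝ) + 1)) :=
            mul_le_mul_of_nonneg_right this (by positivity)
        _ = ε := by field_simp
    have hδ2 : δ * (|α| + 1) ≤ δ₀ / 2 := by
      have : δ ≤ δ₀ / (2 * (|α| + 1)) := min_le_right _ _
      calc δ * (|α| + 1) ≤ (δ₀ / (2 * (|α| + 1))) * (|α| + 1) :=
            mul_le_mul_of_nonneg_right this (by positivity)
        _ = δ₀ / 2 := by field_simp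
    obtain ⟨N, hNd⟩ := hd0 δ hδpos
    obtain ⟨n, hn, m, hm, hnm⟩ := hbad N
    -- chain bound
    have hchain : ∀ k : ℕ, ∀ q ≥ N, G (x q) (x (q + k)) (x (q + k)) ≤ k * δ := by
      intro k
      induction k with
      | zero => intro q _; simp [hG.eq_zero]
      | succ k ih =>
        intro q hq
        have h1 := hG.rectangle (x q) (x (q + (k+1))) (x (q + (k+1))) (x (q + 1))
        have h2 : q + (k + 1) = (q + 1) + k := by omega
        rw [h2] at h1 ⊢
        have h3 := ih (q + 1) (by omega)
        have h4 : d q < δ := hNd q hq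
        have h5 : G (x q) (x (q+1)) (x (q+1)) = d q := rfl
        push_cast
        nlinarith [h1, h3]
    -- pick ordered pair a > b with big G
    obtain ⟨a, b, hbN, hba, hGab⟩ :
        ∃ a b : ℕ, N ≤ b ∧ b < a ∧ ε / 2 ≤ G (x a) (x b) (x b) := by
      rcases lt_trichotomy n m with h | h | h
      · refine ⟨m, n, hn, h, ?_⟩
        have h1 : G (x n) (x m) (x m) = G (x m) (x m) (x n) := by
          rw [hG.symm_left (x n) (x m) (x m), hG.symm_right (x m) (x n) (x m)]
        have h2 := gmet_xx_le hG (x m) (x n)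
        linarith
      · exfalso
        subst h
        have h0 := hG.eq_zero (x n)
        rw [h0] at hnm
        linarith
      · exact ⟨n, m, hm, h, by linarith⟩
    have haN : N ≤ a := le_trans hbN hba.le
    -- separation: a ≥ b + 2p
    have hsep : b + 2 * p ≤ a := by
      by_contra hlt
      push_neg at hlt
      have hk : a = b + (a - b) := by omega
      set k := a - b with hkdef
      have hkk : k ≤ 2 * p := by omega
      have h1 : G (x b) (x (b + k)) (x (b + k)) ≤ k * δ := hchain k b hbN
      rw [← hk] at h1
      have h2 := gmet_swap hG (x a) (x b)
      have hkr : (k:ℝ) ≤ 2 * (p:ℝ) := by exact_mod_cast hkk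
      have h3 : (k:ℝ) * δ ≤ 2 * (p:ℝ) * δ := mul_le_mul_of_nonneg_right hkr hδpos.le
      linarith [h1, h2, h3, hGab, hδ1, hδpos.le, hε]
    -- shift b to b' with right residue
    set rr := (a + 1 - b) % p with hrrdef
    set b' := b + rr with hb'def
    have hrrp : rr < p := Nat.mod_lt _ hp
    have hb'a : b' < a := by omega
    have hb'N : N ≤ b' := by omega
    have hfin : ((b' : ℕ) : Fin p) = ((a : ℕ) : Fin p) + 1 := by
      have h1 : ((b' : ℕ) : Fin p) = (b : Fin p) + (((a + 1 - b) % p : ℕ) : Fin p) := by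
        rw [hb'def]; push_cast [hrrdef]; ring
      rw [h1, fin_cast_mod p]
      have h2 : b + (a + 1 - b) = a + 1 := by omega
      have h3 : (b : Fin p) + ((a + 1 - b : ℕ) : Fin p) = ((b + (a + 1 - b) : ℕ) : Fin p) := by
        push_cast; ring
      rw [h3, h2]; push_cast; ring
    -- shift bound: G (x a) (x b) (x b) ≤ G (x a) (x b') (x b') + 2*(rr*δ)
    have hshift : ∀ j : ℕ, ∀ cq ≥ N, G (x a) (x cq) (x cq) ≤
        G (x a) (x (cq + j)) (x (cq + j)) + 2 * ((j:ℝ) * δ) := by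
      intro j
      induction j with
      | zero => intro cq _; simp
      | succ j ih =>
        intro cq hcq
        have h1 := hG.rectangle (x a) (x cq) (x cq) (x (cq + 1))
        have h2 : G (x (cq+1)) (x cq) (x cq) = G (x cq) (x cq) (x (cq+1)) := by
          rw [hG.symm_left (x (cq+1)) (x cq) (x cq), hG.symm_right (x cq) (x (cq+1)) (x cq)]
        have h3 := gmet_xx_le hG (x cq) (x (cq + 1))
        have h4 : d cq < δ := hNd cq hcq
        have h5 : G (x cq) (x (cq+1)) (x (cq+1)) = d cq := rfl
        have h6 := ih (cq + 1) (by omega)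
        have h7 : cq + 1 + j = cq + (j + 1) := by omega
        rw [h7] at h6
        push_cast
        nlinarith
    have hGab' : ε / 2 - 2 * ((p:ℝ) * δ) ≤ G (x a) (x b') (x b') := by
      have h1 := hshift rr b hbN
      rw [← hb'def] at h1
      have hrrr : (rr:ℝ) ≤ (p:ℝ) := by exact_mod_cast hrrp.le
      nlinarith [hδpos.le]
    -- post-step bound
    have hpost : G (x a) (x b') (x b') ≤
        d a + G (x (a+1)) (x (b'+1)) (x (b'+1)) + 2 * d b' := by
      have h1 := hG.rectangle (x a) (x b') (x b') (x (a + 1))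
      have h2 := hG.rectangle (x (a+1)) (x b') (x b') (x (b' + 1))
      have h3 : G (x (b'+1)) (x b') (x b') = G (x b') (x b') (x (b'+1)) := by
        rw [hG.symm_left (x (b'+1)) (x b') (x b'), hG.symm_right (x b') (x (b'+1)) (x b')]
      have h4 := gmet_xx_le hG (x b') (x (b' + 1))
      have h5 : G (x b') (x (b'+1)) (x (b'+1)) = d b' := rfl
      have h6 : G (x a) (x (a+1)) (x (a+1)) = d a := rfl
      linarith
    have hda : d a < δ := hNd a haN
    have hdb' : d b' < δ := hNd b' hb'N
    have hg : ε / 4 ≤ G (x (a+1)) (x (b'+1)) (x (b'+1)) := by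
      have hpd : (0:ℝ) ≤ (p:ℝ) := Nat.cast_nonneg p
      nlinarith [hδpos.le]
    have hkey2 := key a b' hfin
    have hdab : d a ≤ d b' := hant hb'a.le
    have hs0 : 0 ≤ α * d a + γ * d b' := by
      rcases le_or_gt 0 α with h | h
      · have := dnn a; have := dnn b'; positivity
      · nlinarith [dnn b']
    have hs1 : α * d a + γ * d b' ≤ (|α| + 1) * δ := by
      have h1 : α * d a ≤ |α| * δ := by
        calc α * d a ≤ |α| * d a := mul_le_mul_of_nonneg_right (le_abs_self α) (dnn a)
          _ ≤ |α| * δ := mul_le_mul_of_nonneg_left hda.le (abs_nonneg α)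
      nlinarith [dnn b']
    have hφs : φ (α * d a + γ * d b') < φ (ε / 4) := by
      have hd : dist (α * d a + γ * d b') (0:ℝ) < δ₀ := by
        rw [Real.dist_eq, sub_zero, abs_of_nonneg hs0]
        nlinarith
      have := hδ₀ (Set.mem_Ici.2 hs0) hd
      rw [Real.dist_eq] at this
      have hz : φ (0:ℝ) = 0 := (hφ.eq_zero_iff 0 le_rfl).2 rfl
      rw [hz, sub_zero, abs_of_nonneg (hφ.nonneg _ hs0)] at this
      exact this
    have hφmono : φ (ε / 4) ≤ φ (G (x (a+1)) (x (b'+1)) (x (b'+1))) :=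
      hφ.mono (Set.mem_Ici.2 (by linarith)) (Set.mem_Ici.2 (hG.nonneg _ _ _)) hg
    have hψnn : 0 ≤ ψ (d a) (d b') (d b') := hψ.nonneg _ _ _ (dnn a) (dnn b') (dnn b')
    linarith
  have hC : GCauchySeq G x := by
    intro ε hε
    obtain ⟨N, hNp⟩ := hpair (ε / 3) (by linarith)
    refine ⟨N, fun n hn m hm l hl => ?_⟩
    have h1 := hG.rectangle (x n) (x m) (x l) (x m)
    have h2 := gmet_xx_le hG (x m) (x l)
    have h3 := hNp n hn m hm
    have h4 := hNp m hm l hl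
    linarith
  obtain ⟨u, hu⟩ := hcompl x hC
  have heu : ∀ ε > (0:ℝ), ∃ N, ∀ n ≥ N, G u (x n) (x n) < ε := by
    intro ε hε
    obtain ⟨N, hN⟩ := hu ε hε
    exact ⟨N, fun n hn => hN n hn n hn⟩
  have huA : ∀ i : Fin p, u ∈ A i := by
    intro i
    apply hcl i (fun k => x (i.val + k * p)) ?_ u ?_
    · intro k
      have hm := memA (i.val + k * p)
      have hcast : ((i.val + k * p : ℕ) : Fin p) = i := by
        push_cast
        simp [Fin.cast_val_eq_self]
      rwa [hcast] at hm
    · intro ε hε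
      obtain ⟨N, hN⟩ := hu ε hε
      refine ⟨N, fun k hk k' hk' => hN _ ?_ _ ?_⟩
      · have : k ≤ k * p := Nat.le_mul_of_pos_right k hp
        omega
      · have : k' ≤ k' * p := Nat.le_mul_of_pos_right k' hp
        omega
  -- u is a fixed point
  have hfix : T u = u := by
    by_contra hneq
    set D := G u (T u) (T u) with hDdef
    have hD : 0 < D := by
      have h1 : 0 < G (T u) (T u) u := hG.pos_of_ne (T u) u hneq
      have h2 : G u (T u) (T u) = G (T u) (T u) u := by
        rw [hG.symm_left u (T u) (T u), hG.symm_right (T u) u (T u)]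
      rw [hDdef, h2]; exact h1
    set c := ψ 0 D D with hcdef
    have hc : 0 < c := by
      rcases (hψ.nonneg 0 D D le_rfl hD.le hD.le).lt_or_eq with h | h
      · exact h
      · exact absurd ((hψ.eq_zero_iff 0 D D le_rfl hD.le hD.le).1 h.symm).2.1 hD.ne'
    have hγD : (0:ℝ) ≤ γ * D := by positivity
    obtain ⟨η₁, hη₁pos, hη₁⟩ :=
      Metric.continuousWithinAt_iff.1 (hφ.continuous D (Set.mem_Ici.2 hD.le)) (c / 4)
        (by linarith)
    obtain ⟨η₂, hη₂pos, hη₂⟩ :=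
      Metric.continuousWithinAt_iff.1 (hφ.continuous (γ * D) (Set.mem_Ici.2 hγD)) (c / 4)
        (by linarith)
    obtain ⟨η₃, hη₃pos, hη₃⟩ :=
      Metric.continuousWithinAt_iff.1
        (hψ.continuous (0, D, D) ⟨Set.mem_Ici.2 le_rfl, Set.mem_Ici.2 hD.le, Set.mem_Ici.2 hD.le⟩)
        (c / 2) (by linarith)
    have habs : (0:ℝ) < |α| + 1 := by positivity
    set τ := if 0 ≤ α then (1:ℝ) else γ * D / (|α| + 1) with hτdef
    have hτpos : 0 < τ := by
      rw [hτdef]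
      split_ifs with h
      · norm_num
      · push_neg at h
        have hγpos : 0 < γ := by linarith
        positivity
    set θ := min (min η₁ η₃) (min (η₂ / (|α| + 1)) τ) with hθdef
    have hθpos : 0 < θ := lt_min (lt_min hη₁pos hη₃pos) (lt_min (by positivity) hτpos)
    obtain ⟨N₁, hN₁⟩ := hd0 θ hθpos
    obtain ⟨N₂, hN₂⟩ := heu (min η₁ D) (lt_min hη₁pos hD)
    set n := max N₁ N₂ with hndef
    have hdn : d n < θ := hN₁ n (le_max_left _ _)
    have hdn1 : d n < η₁ := lt_of_lt_of_le hdn (le_trans (min_le_left _ _) (min_le_left _ _))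
    have hdn3 : d n < η₃ := lt_of_lt_of_le hdn (le_trans (min_le_left _ _) (min_le_right _ _))
    have hdn2 : d n * (|α| + 1) < η₂ := by
      have := lt_of_lt_of_le hdn (le_trans (min_le_right _ _) (min_le_left _ _))
      exact (lt_div_iff₀ habs).1 this
    have hdnτ : d n < τ := lt_of_lt_of_le hdn (le_trans (min_le_right _ _) (min_le_right _ _))
    set e := G u (x (n + 1)) (x (n + 1)) with hedef
    have he : e < min η₁ D := hN₂ (n + 1) (le_trans (le_max_right _ _) (Nat.le_succ n))
    have he1 : e < η₁ := lt_of_lt_of_le he (min_le_left _ _)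
    have heD : e < D := lt_of_lt_of_le he (min_le_right _ _)
    have hennn : 0 ≤ e := hG.nonneg _ _ _
    set g := G (x (n + 1)) (T u) (T u) with hgdef
    have hge : D ≤ e + g := by
      have h := hG.rectangle u (T u) (T u) (x (n + 1))
      rw [hDdef, hedef, hgdef]
      linarith [h]
    have hgnn : 0 ≤ g := hG.nonneg _ _ _
    have hφg : φ D - c / 4 < φ g := by
      have hmono : φ (D - e) ≤ φ g :=
        hφ.mono (Set.mem_Ici.2 (by linarith)) (Set.mem_Ici.2 hgnn) (by linarith)
      have hcont := hη₁ (Set.mem_Ici.2 (by linarith : (0:ℝ) ≤ D - e))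
        (by rw [Real.dist_eq, abs_of_nonpos (by linarith : D - e - D ≤ 0)]; simp [abs_of_nonneg hennn]; linarith [he1])
      rw [Real.dist_eq] at hcont
      have := abs_lt.1 hcont
      linarith [this.1]
    have hcon := hcontr (n : Fin p) (x n) (memA n) u (huA _)
    rw [← hxs n] at hcon
    have hcon' : φ g ≤ φ (α * d n + γ * D) - ψ (d n) D D := hcon
    have hdnn := dnn n
    have hs0 : 0 ≤ α * d n + γ * D := by
      rcases le_or_gt 0 α with h | h
      · positivity
      · have hτeq : τ = γ * D / (|α| + 1) := by rw [hτdef, if_neg (not_le.2 h)]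
        rw [hτeq] at hdnτ
        have h2 : d n * (|α| + 1) < γ * D := (lt_div_iff₀ habs).1 hdnτ
        have hαabs : |α| = -α := abs_of_neg h
        nlinarith
    have hsd : |α * d n + γ * D - γ * D| < η₂ := by
      have h1 : |α * d n| = |α| * d n := by rw [abs_mul, abs_of_nonneg hdnn]
      have h2 : |α| * d n ≤ (|α| + 1) * d n := by nlinarith
      rw [show α * d n + γ * D - γ * D = α * d n by ring, h1]
      nlinarith
    have hφs : φ (α * d n + γ * D) < φ (γ * D) + c / 4 := by
      have := hη₂ (Set.mem_Ici.2 hs0) (by rw [Real.dist_eq]; exact hsd)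
      rw [Real.dist_eq] at this
      have := abs_lt.1 this
      linarith [this.2]
    have hφγD : φ (γ * D) ≤ φ D :=
      hφ.mono (Set.mem_Ici.2 hγD) (Set.mem_Ici.2 hD.le) (by nlinarith)
    have hψlb : c / 2 < ψ (d n) D D := by
      have hmem : ((d n, D, D) : ℝ × ℝ × ℝ) ∈ Set.Ici (0:ℝ) ×ˢ Set.Ici (0:ℝ) ×ˢ Set.Ici (0:ℝ) :=
        ⟨Set.mem_Ici.2 hdnn, Set.mem_Ici.2 hD.le, Set.mem_Ici.2 hD.le⟩
      have hdist : dist ((d n, D, D) : ℝ × ℝ × ℝ) ((0, D, D) : ℝ × ℝ × ℝ) < η₃ := by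
        rw [Prod.dist_eq, Prod.dist_eq]
        apply max_lt
        · rw [Real.dist_eq, sub_zero, abs_of_nonneg hdnn]; exact hdn3
        · apply max_lt <;> (rw [Real.dist_eq, sub_self, abs_zero]; exact hη₃pos)
      have := hη₃ hmem hdist
      rw [Real.dist_eq] at this
      have := abs_lt.1 this
      simp only at this
      linarith [this.1]
    linarith
  -- uniqueness and conclusion
  have hφ0 : φ 0 = 0 := (hφ.eq_zero_iff 0 le_rfl).2 rfl
  have hψ0 : ψ 0 0 0 = 0 := (hψ.eq_zero_iff 0 0 0 le_rfl le_rfl le_rfl).2 ⟨rfl, rfl, rfl⟩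
  refine ⟨u, Set.mem_iInter.2 huA, hfix, ?_⟩
  intro v hv hvfix
  rcases Set.mem_iUnion.1 hv with ⟨i, hvi⟩
  by_contra hvu
  have hcon := hcontr i v hvi u (huA _)
  rw [hvfix, hfix, hG.eq_zero v, hG.eq_zero u] at hcon
  norm_num [hφ0, hψ0] at hcon
  have h1 : 0 ≤ G v u u := hG.nonneg _ _ _
  have h2 : φ (G v u u) = 0 := le_antisymm hcon (hφ.nonneg _ h1)
  have h3 : G v u u = 0 := (hφ.eq_zero_iff _ h1).1 h2
  have h4 : 0 < G u u v := hG.pos_of_ne u v (fun h => hvu h.symm)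
  have h5 : G v u u = G u u v := by rw [hG.symm_left v u u, hG.symm_right u v u]
  linarith
end

section
/- Let {A_i}_{i=1}^p be non-empty closed subsets of a complete G-metric space (X,G) and let T : ⋃_{i=1}^p A_i → ⋃_{i=1}^p A_i be a cyclical operator. Suppose there are an altering distance function φ, a function ψ as below, and constants α, δ with 0 ≤ α ≤ 1/2 and 0 < α + δ ≤ 1 such that for every i ∈ {1,…,p}, every x ∈ A_i and every y ∈ A_{i+1}, φ(G(Tx,Ty,Ty)) ≤ φ(α·G(x,Ty,Ty) + δ·G(y,y,Tx)) − ψ(G(x,Ty,Ty), G(y,y,Tx), G(y,y,Tx)). Then T has a unique fixed point u, and u ∈ ⋂_{i=1}^p A_i. -/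
open Filter Topology
open Fin.NatCast

private lemma phi_lim {φ : ℝ → ℝ} (hc : ContinuousOn φ (Set.Ici 0))
    {s : ℕ → ℝ} {l : ℝ} (hl : 0 ≤ l) (hs : Tendsto s atTop (𝓝 l))
    (hnn : ∀ᶠ n in atTop, 0 ≤ s n) :
    Tendsto (fun n => φ (s n)) atTop (𝓝 (φ l)) :=
  (hc l hl).tendsto.comp
    (tendsto_nhdsWithin_of_tendsto_nhds_of_eventually_within _ hs
      (hnn.mono fun _ h => Set.mem_Ici.2 h))

private lemma psi_lim {ψ : ℝ → ℝ → ℝ → ℝ}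
    (hc : ContinuousOn (fun q : ℝ × ℝ × ℝ => ψ q.1 q.2.1 q.2.2)
      (Set.Ici 0 ×ˢ Set.Ici 0 ×ˢ Set.Ici 0))
    {a b c : ℕ → ℝ} {la lb lc : ℝ} (hla : 0 ≤ la) (hlb : 0 ≤ lb) (hlc : 0 ≤ lc)
    (ha : Tendsto a atTop (𝓝 la)) (hb : Tendsto b atTop (𝓝 lb))
    (hcc : Tendsto c atTop (𝓝 lc))
    (hann : ∀ n, 0 ≤ a n) (hbnn : ∀ n, 0 ≤ b n) (hcnn : ∀ n, 0 ≤ c n) :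
    Tendsto (fun n => ψ (a n) (b n) (c n)) atTop (𝓝 (ψ la lb lc)) := by
  have h1 : Tendsto (fun n => ((a n, b n, c n) : ℝ × ℝ × ℝ)) atTop (𝓝 (la, lb, lc)) :=
    ha.prodMk_nhds (hb.prodMk_nhds hcc)
  have h2 := tendsto_nhdsWithin_of_tendsto_nhds_of_eventually_within _ h1
    (Eventually.of_forall fun n => (Set.mem_prod.2 ⟨hann n, Set.mem_prod.2 ⟨hbnn n, hcnn n⟩⟩))
  exact (hc (la, lb, lc) (Set.mem_prod.2 ⟨hla, Set.mem_prod.2 ⟨hlb, hlc⟩⟩)).tendsto.comp h2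


set_option maxHeartbeats 1000000 in
theorem stmt_1 {X : Type*} (G : X → X → X → ℝ) (hG : IsGMetric G)
    (hcompl : GComplete G)
    (p : ℕ) [NeZero p] (A : Fin p → Set X)
    (hne : ∀ i, (A i).Nonempty) (hcl : ∀ i, GClosed G (A i))
    (T : X → X) (hcyc : ∀ i : Fin p, ∀ x ∈ A i, T x ∈ A (i + 1))
    (φ : ℝ → ℝ) (ψ : ℝ → ℝ → ℝ → ℝ)
    (hφ : IsAlteringDistance φ) (hψ : IsPsiFun ψ)
    (α δ : ℝ) (hα0 : 0 ≤ α) (hα1 : α ≤ 1 / 2)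
    (hαδ0 : 0 < α + δ) (hαδ1 : α + δ ≤ 1)
    (hcontr : ∀ i : Fin p, ∀ x ∈ A i, ∀ y ∈ A (i + 1),
      φ (G (T x) (T y) (T y)) ≤
        φ (α * G x (T y) (T y) + δ * G y y (T x)) -
          ψ (G x (T y) (T y)) (G y y (T x)) (G y y (T x))) :
    ∃ u ∈ ⋂ i, A i, T u = u ∧ ∀ v ∈ ⋃ i, A i, T v = v → v = u := by

  classical
  obtain ⟨a0, ha0⟩ := hne 0
  set x : ℕ → X := fun n => T^[n] a0 with hxdef
  have hxs : ∀ n, x (n + 1) = T (x n) := fun n => Function.iterate_succ_apply' T n a0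
  have hpow : ∀ n : ℕ, ((n : ℕ) : Fin p) + 1 = ((n + 1 : ℕ) : Fin p) := by
    intro n; push_cast; ring
  have hxmem : ∀ n : ℕ, x n ∈ A (n : Fin p) := by
    intro n; induction n with
    | zero => simpa [hxdef] using ha0
    | succ n ih =>
      rw [hxs, ← hpow]
      exact hcyc _ _ ih
  have hnn := hG.nonneg
  have perm3 : ∀ a b : X, G a b b = G b b a := fun a b =>
    (hG.symm_left a b b).trans (hG.symm_right b a b)
  have hDtri : ∀ a b c : X, G a c c ≤ G a b b + G b c c := fun a b c =>
    hG.rectangle a c c b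
  have hDsym2 : ∀ a b : X, G a b b ≤ 2 * G b a a := by
    intro a b
    have h1 : G b b a ≤ G b a a + G a b a := hG.rectangle b b a a
    have h2 : G a b a = G b a a := hG.symm_left a b a
    rw [perm3]; linarith
  have hDzero : ∀ a b : X, G a b b = 0 → a = b := by
    intro a b h
    by_contra hne'
    have h1 : 0 < G b b a := hG.pos_of_ne b a (Ne.symm hne')
    rw [← perm3] at h1; linarith
  have hφ0 : φ 0 = 0 := (hφ.eq_zero_iff 0 le_rfl).2 rfl
  have hψ000 : ψ 0 0 0 = 0 := (hψ.eq_zero_iff 0 0 0 le_rfl le_rfl le_rfl).2 ⟨rfl, rfl, rfl⟩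
  -- the key plain inequality
  have hkey : ∀ i : Fin p, ∀ w ∈ A i, ∀ y ∈ A (i + 1),
      0 ≤ α * G w (T y) (T y) + δ * G y y (T w) →
      G (T w) (T y) (T y) ≤ α * G w (T y) (T y) + δ * G y y (T w) := by
    intro i w hw y hy hR
    have hc := hcontr i w hw y hy
    by_cases hzero : ψ (G w (T y) (T y)) (G y y (T w)) (G y y (T w)) = 0
    · obtain ⟨ha0', hb0', -⟩ :=
        (hψ.eq_zero_iff _ _ _ (hnn _ _ _) (hnn _ _ _) (hnn _ _ _)).1 hzero
      rw [ha0', hb0'] at hc ⊢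
      simp only [mul_zero, add_zero, zero_add, hφ0, hψ000] at hc ⊢
      have hφL : φ (G (T w) (T y) (T y)) = 0 :=
        le_antisymm (by linarith) (hφ.nonneg _ (hnn _ _ _))
      have hL0 := (hφ.eq_zero_iff _ (hnn _ _ _)).1 hφL
      simp [hL0]
    · have hψpos : 0 < ψ (G w (T y) (T y)) (G y y (T w)) (G y y (T w)) :=
        lt_of_le_of_ne (hψ.nonneg _ _ _ (hnn _ _ _) (hnn _ _ _) (hnn _ _ _)) (Ne.symm hzero)
      by_contra hLR
      push_neg at hLR
      have hmono := hφ.mono (Set.mem_Ici.2 hR) (Set.mem_Ici.2 (hnn (T w) (T y) (T y))) hLR.le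
      linarith
  -- successive distances
  set d : ℕ → ℝ := fun n => G (x n) (x (n + 1)) (x (n + 1)) with hddef
  have hdnn : ∀ n, 0 ≤ d n := fun n => hnn _ _ _
  have hmemsucc : ∀ n : ℕ, x (n + 1) ∈ A ((n : Fin p) + 1) := by
    intro n; rw [hpow]; exact hxmem (n + 1)
  have hstep : ∀ n, d (n + 1) ≤ α * G (x n) (x (n + 2)) (x (n + 2)) := by
    intro n
    have hsign : 0 ≤ α * G (x n) (T (x (n + 1))) (T (x (n + 1)))
        + δ * G (x (n + 1)) (x (n + 1)) (T (x n)) := by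
      rw [← hxs n, hG.eq_zero]
      have := hnn (x n) (T (x (n + 1))) (T (x (n + 1)))
      nlinarith
    have h := hkey (n : Fin p) (x n) (hxmem n) (x (n + 1)) (hmemsucc n) hsign
    rw [← hxs n, ← hxs (n + 1), hG.eq_zero] at h
    have h2 : (n : ℕ) + 1 + 1 = n + 2 := rfl
    rw [h2] at h
    simpa using h
  have hdmono : ∀ n, d (n + 1) ≤ d n := by
    intro n
    have h1 := hstep n
    have h2 : G (x n) (x (n + 2)) (x (n + 2)) ≤ d n + d (n + 1) := by
      have := hDtri (x n) (x (n + 1)) (x (n + 2))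
      have h3 : (n : ℕ) + 1 + 1 = n + 2 := rfl
      rw [h3] at this
      exact this
    have h4 : 0 ≤ G (x n) (x (n + 2)) (x (n + 2)) := hnn _ _ _
    nlinarith
  have hdanti : Antitone d := antitone_nat_of_succ_le hdmono
  have hdbdd : BddBelow (Set.range d) := ⟨0, fun v ⟨n, hn⟩ => hn ▸ hdnn n⟩
  have hrtend : Tendsto d atTop (𝓝 (⨅ n, d n)) := tendsto_atTop_ciInf hdanti hdbdd
  have hr0 : 0 ≤ ⨅ n, d n := le_ciInf hdnn
  -- the limit of d is zero
  have htend0 : Tendsto d atTop (𝓝 0) := by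
    rcases eq_or_lt_of_le hα0 with hα | hα
    · -- α = 0 : all later d's vanish
      have hz : ∀ n, d (n + 1) = 0 := by
        intro n
        have := hstep n
        rw [← hα] at this
        simp only [zero_mul] at this
        exact le_antisymm this (hdnn _)
      have : ∀ᶠ n in atTop, d n = 0 := by
        filter_upwards [eventually_ge_atTop 1] with n hn
        obtain ⟨m, rfl⟩ := Nat.exists_eq_add_of_le hn
        rw [add_comm] at *
        exact hz m
      exact Tendsto.congr' (this.mono fun n hn => hn.symm) tendsto_const_nhds
    · -- α > 0
      set r := ⨅ n, d n with hrdef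
      rcases eq_or_lt_of_le hr0 with hr | hr
      · rw [← hr] at hrtend; exact hrtend
      exfalso
      set e : ℕ → ℝ := fun n => G (x n) (x (n + 2)) (x (n + 2)) with hedef
      have helow : ∀ n, 2 * r ≤ e n := by
        intro n
        have h1 := hstep n
        have h2 : r ≤ d (n + 1) := ciInf_le hdbdd (n + 1)
        nlinarith [hnn (x n) (x (n + 2)) (x (n + 2))]
      have heup : ∀ n, e n ≤ d n + d (n + 1) := by
        intro n
        have := hDtri (x n) (x (n + 1)) (x (n + 2))
        have h3 : (n : ℕ) + 1 + 1 = n + 2 := rfl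
        rw [h3] at this
        exact this
      have hetend : Tendsto e atTop (𝓝 (2 * r)) := by
        have hup : Tendsto (fun n => d n + d (n + 1)) atTop (𝓝 (2 * r)) := by
          have h2 := hrtend.comp (tendsto_add_atTop_nat 1)
          have := hrtend.add h2
          rw [show r + r = 2 * r by ring] at this
          exact this
        exact tendsto_of_tendsto_of_tendsto_of_le_of_le tendsto_const_nhds hup helow heup
      -- φ/ψ inequality along the orbit
      have hCn : ∀ n, φ (d (n + 1)) ≤ φ (α * e n) - ψ (e n) 0 0 := by
        intro n
        have hc := hcontr (n : Fin p) (x n) (hxmem n) (x (n + 1)) (hmemsucc n)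
        rw [← hxs n, ← hxs (n + 1), hG.eq_zero] at hc
        have h2 : (n : ℕ) + 1 + 1 = n + 2 := rfl
        rw [h2] at hc
        simpa using hc
      have h1 : Tendsto (fun n => φ (d (n + 1))) atTop (𝓝 (φ r)) :=
        phi_lim hφ.continuous hr.le (hrtend.comp (tendsto_add_atTop_nat 1))
          (Eventually.of_forall fun n => hdnn _)
      have h2 : Tendsto (fun n => φ (α * e n)) atTop (𝓝 (φ (α * (2 * r)))) :=
        phi_lim hφ.continuous (by nlinarith) (hetend.const_mul α)
          (Eventually.of_forall fun n => mul_nonneg hα0 (hnn _ _ _))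
      have h3 : Tendsto (fun n => ψ (e n) 0 0) atTop (𝓝 (ψ (2 * r) 0 0)) :=
        psi_lim hψ.continuous (by linarith) le_rfl le_rfl hetend tendsto_const_nhds
          tendsto_const_nhds (fun n => hnn _ _ _) (fun _ => le_rfl) (fun _ => le_rfl)
      have hlim : φ r ≤ φ (α * (2 * r)) - ψ (2 * r) 0 0 :=
        le_of_tendsto_of_tendsto h1 (h2.sub h3) (Eventually.of_forall hCn)
      have hm : φ (α * (2 * r)) ≤ φ r := by
        apply hφ.mono (Set.mem_Ici.2 (by nlinarith)) (Set.mem_Ici.2 hr.le)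
        nlinarith
      have hψpos : 0 < ψ (2 * r) 0 0 := by
        rcases lt_or_eq_of_le (hψ.nonneg (2 * r) 0 0 (by linarith) le_rfl le_rfl) with h | h
        · exact h
        · exfalso
          have := (hψ.eq_zero_iff (2 * r) 0 0 (by linarith) le_rfl le_rfl).1 h.symm
          linarith [this.1]
      linarith
  -- chain bound
  have hchain : ∀ a t : ℕ, G (x a) (x (a + t)) (x (a + t)) ≤ ∑ i ∈ Finset.range t, d (a + i) := by
    intro a t
    induction t with
    | zero => simp [hG.eq_zero]
    | succ t ih =>
      have h1 := hDtri (x a) (x (a + t)) (x (a + t + 1))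
      rw [Finset.sum_range_succ]
      exact le_trans h1 (by linarith [ih])
  have hchainlt : ∀ a t : ℕ, ∀ η' : ℝ, (∀ i, a ≤ i → d i ≤ η') →
      G (x a) (x (a + t)) (x (a + t)) ≤ t * η' := by
    intro a t η' hd'
    refine le_trans (hchain a t) ?_
    calc ∑ i ∈ Finset.range t, d (a + i) ≤ ∑ _i ∈ Finset.range t, η' :=
          Finset.sum_le_sum fun i _ => hd' (a + i) (Nat.le_add_right a i)
      _ = t * η' := by rw [Finset.sum_const, Finset.card_range, nsmul_eq_mul]
  -- main Cauchy-type estimate along indices congruent to 1 mod p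
  have hCau1 : ∀ ε > (0 : ℝ), ∃ N, ∀ n ≥ N, ∀ k : ℕ,
      G (x n) (x (n + k * p + 1)) (x (n + k * p + 1)) < ε := by
    by_contra hcontra
    push_neg at hcontra
    obtain ⟨ε, hε, hant⟩ := hcontra
    set η : ℕ → ℝ := fun j => min ε (1 / (j + 1)) with hηdef
    have hηpos : ∀ j, 0 < η j := fun j => lt_min hε (by positivity)
    have hηε : ∀ j, η j ≤ ε := fun j => min_le_left _ _
    have hη0 : Tendsto η atTop (𝓝 0) :=
      tendsto_of_tendsto_of_tendsto_of_le_of_le tendsto_const_nhds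
        tendsto_one_div_add_atTop_nhds_zero_nat
        (fun j => (hηpos j).le) (fun j => min_le_right _ _)
    have hP : ∀ j : ℕ, ∃ n m : ℕ, (m : Fin p) = (n : Fin p) + 1 ∧
        ε ≤ G (x n) (x m) (x m) ∧ G (x n) (x m) (x m) ≤ ε + p * η j ∧
        d n ≤ η j ∧ d m ≤ η j := by
      intro j
      obtain ⟨N, hN⟩ := Filter.eventually_atTop.1
        (htend0.eventually (eventually_lt_nhds (hηpos j)))
      obtain ⟨n, hnN, k0, hk0⟩ := hant N
      have hPex : ∃ k, ε ≤ G (x n) (x (n + k * p + 1)) (x (n + k * p + 1)) := ⟨k0, hk0⟩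
      set k := Nat.find hPex with hkdef
      have hk : ε ≤ G (x n) (x (n + k * p + 1)) (x (n + k * p + 1)) := Nat.find_spec hPex
      have hkne : k ≠ 0 := by
        intro h0
        rw [h0] at hk
        simp only [zero_mul, add_zero] at hk
        have : d n < η j := hN n hnN
        have := hηε j
        linarith
      obtain ⟨k', hkk'⟩ := Nat.exists_eq_succ_of_ne_zero hkne
      have hmin : G (x n) (x (n + k' * p + 1)) (x (n + k' * p + 1)) < ε := by
        have := Nat.find_min hPex (m := k') (by omega)
        push_neg at this
        exact this
      refine ⟨n, n + k * p + 1, ?_, hk, ?_, (hN n hnN).le, (hN _ (by omega)).le⟩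
      · push_cast [Fin.natCast_self]
        simp [Fin.ext_iff, Fin.val_natCast, Nat.mul_mod_left]
      · have hsplit : n + k * p + 1 = (n + k' * p + 1) + p := by
          rw [hkk', Nat.succ_mul]; ring
        have h1 : G (x n) (x (n + k * p + 1)) (x (n + k * p + 1)) ≤
            G (x n) (x (n + k' * p + 1)) (x (n + k' * p + 1)) +
            G (x (n + k' * p + 1)) (x (n + k * p + 1)) (x (n + k * p + 1)) :=
          hDtri _ _ _
        have h2 : G (x (n + k' * p + 1)) (x (n + k * p + 1)) (x (n + k * p + 1)) ≤
            p * η j := by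
          rw [hsplit]
          exact hchainlt _ p (η j) fun i hi => (hN i (by omega)).le
        linarith
    choose nn mm hcong h1 h2 h3 h4 using hP
    -- the four sequences
    set aa : ℕ → ℝ := fun j => G (x (nn j)) (x (mm j)) (x (mm j)) with haadef
    set AA : ℕ → ℝ := fun j => G (x (nn j)) (x (mm j + 1)) (x (mm j + 1)) with hAAdef
    set BB : ℕ → ℝ := fun j => G (x (nn j + 1)) (x (mm j)) (x (mm j)) with hBBdef
    set WW : ℕ → ℝ := fun j => G (x (nn j + 1)) (x (mm j + 1)) (x (mm j + 1)) with hWWdef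
    have hsq : ∀ (s : ℕ → ℝ) (c1 c2 : ℝ), (∀ j, ε - c1 * η j ≤ s j) →
        (∀ j, s j ≤ ε + c2 * η j) → Tendsto s atTop (𝓝 ε) := by
      intro s c1 c2 hlo hhi
      have hc1 : Tendsto (fun _ : ℕ => ε) atTop (𝓝 ε) := tendsto_const_nhds
      have hc2 : Tendsto (fun _ : ℕ => c1) atTop (𝓝 c1) := tendsto_const_nhds
      have hc3 : Tendsto (fun _ : ℕ => c2) atTop (𝓝 c2) := tendsto_const_nhds
      have hl : Tendsto (fun j => ε - c1 * η j) atTop (𝓝 ε) := by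
        simpa using hc1.sub (hc2.mul hη0)
      have hh : Tendsto (fun j => ε + c2 * η j) atTop (𝓝 ε) := by
        simpa using hc1.add (hc3.mul hη0)
      exact tendsto_of_tendsto_of_tendsto_of_le_of_le hl hh hlo hhi
    -- bounds
    have hAup : ∀ j, AA j ≤ ε + ((p : ℝ) + 1) * η j := by
      intro j
      have ht := hDtri (x (nn j)) (x (mm j)) (x (mm j + 1))
      have := h2 j; have := h4 j
      simp only [hAAdef, haadef] at *
      nlinarith
    have hAlow : ∀ j, ε - 2 * η j ≤ AA j := by
      intro j
      have ht := hDtri (x (nn j)) (x (mm j + 1)) (x (mm j))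
      have hs := hDsym2 (x (mm j + 1)) (x (mm j))
      have := h1 j; have := h4 j
      simp only [hAAdef, haadef] at *
      nlinarith
    have hBup : ∀ j, BB j ≤ ε + ((p : ℝ) + 2) * η j := by
      intro j
      have ht := hDtri (x (nn j + 1)) (x (nn j)) (x (mm j))
      have hs := hDsym2 (x (nn j + 1)) (x (nn j))
      have := h2 j; have := h3 j
      simp only [hBBdef, haadef] at *
      nlinarith
    have hBlow : ∀ j, ε - 1 * η j ≤ BB j := by
      intro j
      have ht := hDtri (x (nn j)) (x (nn j + 1)) (x (mm j))
      have := h1 j; have := h3 j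
      simp only [hBBdef, haadef] at *
      nlinarith
    have hWup : ∀ j, WW j ≤ ε + ((p : ℝ) + 3) * η j := by
      intro j
      have ht := hDtri (x (nn j + 1)) (x (nn j)) (x (mm j + 1))
      have hs := hDsym2 (x (nn j + 1)) (x (nn j))
      have := hAup j; have := h3 j
      simp only [hAAdef, hWWdef] at *
      nlinarith
    have hWlow : ∀ j, ε - 3 * η j ≤ WW j := by
      intro j
      have ht := hDtri (x (nn j)) (x (nn j + 1)) (x (mm j))
      have ht2 := hDtri (x (nn j + 1)) (x (mm j + 1)) (x (mm j))
      have hs := hDsym2 (x (mm j + 1)) (x (mm j))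
      have := h1 j; have := h3 j; have := h4 j
      simp only [hBBdef, haadef, hWWdef] at *
      nlinarith
    have hAt : Tendsto AA atTop (𝓝 ε) := hsq AA 2 ((p : ℝ) + 1) hAlow hAup
    have hBt : Tendsto BB atTop (𝓝 ε) := hsq BB 1 ((p : ℝ) + 2) hBlow hBup
    have hWt : Tendsto WW atTop (𝓝 ε) := hsq WW 3 ((p : ℝ) + 3) hWlow hWup
    -- contraction along the chosen pairs
    have hcontrj : ∀ j, φ (WW j) ≤ φ (α * AA j + δ * BB j) - ψ (AA j) (BB j) (BB j) := by
      intro j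
      have hm' : x (mm j) ∈ A ((nn j : Fin p) + 1) := by rw [← hcong j]; exact hxmem (mm j)
      have hc := hcontr (nn j) (x (nn j)) (hxmem _) (x (mm j)) hm'
      rw [← hxs (nn j), ← hxs (mm j), ← perm3] at hc
      exact hc
    have hRt : Tendsto (fun j => α * AA j + δ * BB j) atTop (𝓝 (α * ε + δ * ε)) :=
      (hAt.const_mul α).add (hBt.const_mul δ)
    have hRpos : 0 < α * ε + δ * ε := by nlinarith
    have hevR : ∀ᶠ j in atTop, 0 ≤ α * AA j + δ * BB j :=
      hRt.eventually (eventually_ge_nhds hRpos)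
    have hφW : Tendsto (fun j => φ (WW j)) atTop (𝓝 (φ ε)) :=
      phi_lim hφ.continuous hε.le hWt (Eventually.of_forall fun j => hnn _ _ _)
    have hφR : Tendsto (fun j => φ (α * AA j + δ * BB j)) atTop (𝓝 (φ (α * ε + δ * ε))) :=
      phi_lim hφ.continuous hRpos.le hRt hevR
    have hψt : Tendsto (fun j => ψ (AA j) (BB j) (BB j)) atTop (𝓝 (ψ ε ε ε)) :=
      psi_lim hψ.continuous hε.le hε.le hε.le hAt hBt hBt
        (fun j => hnn _ _ _) (fun j => hnn _ _ _) (fun j => hnn _ _ _)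
    have hfinal : φ ε ≤ φ (α * ε + δ * ε) - ψ ε ε ε :=
      le_of_tendsto_of_tendsto hφW (hφR.sub hψt) (Eventually.of_forall hcontrj)
    have hmR : φ (α * ε + δ * ε) ≤ φ ε := by
      apply hφ.mono (Set.mem_Ici.2 hRpos.le) (Set.mem_Ici.2 hε.le)
      nlinarith
    have hψp : 0 < ψ ε ε ε := by
      rcases lt_or_eq_of_le (hψ.nonneg ε ε ε hε.le hε.le hε.le) with h | h
      · exact h
      · exfalso
        have := (hψ.eq_zero_iff ε ε ε hε.le hε.le hε.le).1 h.symm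
        linarith [this.1]
    linarith
  have hp1 : 1 ≤ p := Nat.one_le_iff_ne_zero.2 (NeZero.ne p)
  have hpR : (0 : ℝ) < p := by exact_mod_cast hp1
  -- all pairs eventually close
  have hDD : ∀ ε > (0 : ℝ), ∃ N, ∀ n ≥ N, ∀ m ≥ N, G (x n) (x m) (x m) < ε := by
    intro ε hε
    obtain ⟨N1, hN1⟩ := hCau1 (ε / 4) (by linarith)
    have hη4 : (0 : ℝ) < ε / (4 * p) := by positivity
    obtain ⟨N2, hN2⟩ := Filter.eventually_atTop.1 (htend0.eventually (eventually_lt_nhds hη4))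
    refine ⟨max N1 N2, ?_⟩
    have hone : ∀ n m, max N1 N2 ≤ n → n ≤ m → G (x n) (x m) (x m) < ε / 2 := by
      intro n m hn hnm
      obtain ⟨t, rfl⟩ := Nat.exists_eq_add_of_le hnm
      rcases Nat.eq_zero_or_pos t with rfl | ht
      · simpa [hG.eq_zero] using by linarith
      obtain ⟨t', rfl⟩ := Nat.exists_eq_succ_of_ne_zero (Nat.pos_iff_ne_zero.1 ht)
      set j0 := t' % p with hj0
      set k := t' / p with hk
      have h5 : p * k + j0 = t' := Nat.div_add_mod t' p
      have hm : n + (t' + 1) = (n + j0) + k * p + 1 := by rw [← h5]; ring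
      rw [hm]
      have h6 : G (x n) (x ((n + j0) + k * p + 1)) (x ((n + j0) + k * p + 1)) ≤
          G (x n) (x (n + j0)) (x (n + j0)) +
          G (x (n + j0)) (x ((n + j0) + k * p + 1)) (x ((n + j0) + k * p + 1)) := hDtri _ _ _
      have h7 : G (x n) (x (n + j0)) (x (n + j0)) ≤ j0 * (ε / (4 * p)) :=
        hchainlt n j0 _ fun i hi => (hN2 i (le_trans (le_trans (le_max_right _ _) hn) hi)).le
      have h8 : (j0 : ℝ) * (ε / (4 * p)) ≤ ε / 4 := by
        have hj : (j0 : ℝ) ≤ p := by exact_mod_cast (Nat.mod_lt t' (by omega)).le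
        have hpne : (p : ℝ) ≠ 0 := ne_of_gt hpR
        have hq : (p : ℝ) * (ε / (4 * p)) = ε / 4 := by field_simp
        calc (j0 : ℝ) * (ε / (4 * p)) ≤ (p : ℝ) * (ε / (4 * p)) :=
              mul_le_mul_of_nonneg_right hj hη4.le
          _ = ε / 4 := hq
      have h9 : G (x (n + j0)) (x ((n + j0) + k * p + 1)) (x ((n + j0) + k * p + 1)) < ε / 4 :=
        hN1 (n + j0) (le_trans (le_trans (le_max_left _ _) hn) (Nat.le_add_right n j0)) k
      calc G (x n) (x ((n + j0) + k * p + 1)) (x ((n + j0) + k * p + 1)) ≤ _ := h6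
        _ < ε / 2 := by linarith
    intro n hn m hm
    rcases le_or_gt n m with h | h
    · linarith [hone n m hn h]
    · have := hDsym2 (x n) (x m)
      have := hone m n hm h.le
      linarith
  -- the orbit is G-Cauchy
  have hcauchy : GCauchySeq G x := by
    intro ε hε
    obtain ⟨N, hN⟩ := hDD (ε / 2) (by linarith)
    refine ⟨N, fun n hn m hm l hl => ?_⟩
    have h1 : G (x n) (x m) (x l) ≤ G (x n) (x m) (x m) + G (x m) (x m) (x l) :=
      hG.rectangle (x n) (x m) (x l) (x m)
    have h2 : G (x m) (x m) (x l) = G (x l) (x m) (x m) := (perm3 (x l) (x m)).symm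
    rw [h2] at h1
    linarith [hN n hn m hm, hN l hl m hm]
  obtain ⟨u, hu⟩ := hcompl x hcauchy
  -- convergence facts
  have hDun : Tendsto (fun n => G u (x n) (x n)) atTop (𝓝 0) := by
    refine tendsto_order.2 ⟨fun a ha => Eventually.of_forall fun n => lt_of_lt_of_le ha (hnn _ _ _), fun a ha => ?_⟩
    obtain ⟨N, hN⟩ := hu a ha
    exact Filter.eventually_atTop.2 ⟨N, fun n hn => hN n hn n hn⟩
  have hDun' : Tendsto (fun n => G (x n) u u) atTop (𝓝 0) := by
    have h2 : Tendsto (fun n => 2 * G u (x n) (x n)) atTop (𝓝 0) := by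
      simpa using hDun.const_mul 2
    exact tendsto_of_tendsto_of_tendsto_of_le_of_le tendsto_const_nhds h2
      (fun n => hnn _ _ _) (fun n => hDsym2 _ _)
  -- u belongs to every A i
  have humem : ∀ i, u ∈ A i := by
    intro i
    apply hcl i (fun k => x (k * p + i.val)) ?_ u ?_
    · intro k
      have hcast : ((k * p + i.val : ℕ) : Fin p) = i := by
        push_cast [Fin.natCast_self]
        simp [Fin.cast_val_eq_self]
      have := hxmem (k * p + i.val)
      rwa [hcast] at this
    · intro ε' hε'
      obtain ⟨N, hN⟩ := hu ε' hε'
      have hple : ∀ k : ℕ, k ≤ k * p + i.val := fun k =>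
        le_trans (le_trans (mul_one k).symm.le (Nat.mul_le_mul_left k hp1)) (Nat.le_add_right _ _)
      exact ⟨N, fun n hn m hm => hN _ (le_trans hn (hple n)) _ (le_trans hm (hple m))⟩
  -- u is a fixed point
  have hTu : T u = u := by
    by_contra hnefix
    have hL : 0 < G u (T u) (T u) :=
      lt_of_le_of_ne (hnn u (T u) (T u)) (fun h => hnefix (hDzero u (T u) h.symm).symm)
    set L := G u (T u) (T u) with hLdef
    have haT : Tendsto (fun n => G (x n) (T u) (T u)) atTop (𝓝 L) := by
      have hcL : Tendsto (fun _ : ℕ => L) atTop (𝓝 L) := tendsto_const_nhds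
      have hlo : Tendsto (fun n => L - G u (x n) (x n)) atTop (𝓝 L) := by
        simpa using hcL.sub hDun
      have hhi : Tendsto (fun n => G (x n) u u + L) atTop (𝓝 L) := by
        simpa using hDun'.add hcL
      refine tendsto_of_tendsto_of_tendsto_of_le_of_le hlo hhi ?_ ?_
      · intro n
        show L - G u (x n) (x n) ≤ G (x n) (T u) (T u)
        have h := hDtri u (x n) (T u)
        rw [← hLdef] at h
        linarith
      · intro n
        show G (x n) (T u) (T u) ≤ G (x n) u u + L
        have h := hDtri (x n) u (T u)
        rw [← hLdef] at h
        linarith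
    have haT1 : Tendsto (fun n => G (x (n + 1)) (T u) (T u)) atTop (𝓝 L) :=
      haT.comp (tendsto_add_atTop_nat 1)
    have hbT : Tendsto (fun n => G (x (n + 1)) u u) atTop (𝓝 0) :=
      hDun'.comp (tendsto_add_atTop_nat 1)
    have hRt : Tendsto (fun n => α * G (x n) (T u) (T u) + δ * G (x (n + 1)) u u)
        atTop (𝓝 (α * L)) := by
      have := (haT.const_mul α).add (hbT.const_mul δ)
      simpa using this
    have hsign : ∀ᶠ n in atTop, 0 ≤ α * G (x n) (T u) (T u) + δ * G (x (n + 1)) u u := by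
      rcases le_or_gt 0 δ with hδ | hδ
      · exact Eventually.of_forall fun n =>
          add_nonneg (mul_nonneg hα0 (hnn _ _ _)) (mul_nonneg hδ (hnn _ _ _))
      · have hαpos : 0 < α := by linarith
        exact hRt.eventually (eventually_ge_nhds (mul_pos hαpos hL))
    have hstepu : ∀ᶠ n in atTop,
        G (x (n + 1)) (T u) (T u) ≤ α * G (x n) (T u) (T u) + δ * G (x (n + 1)) u u := by
      filter_upwards [hsign] with n hs
      have hguu : G u u (T (x n)) = G (x (n + 1)) u u := by
        rw [← hxs n]; exact (perm3 (x (n + 1)) u).symm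
      have hk := hkey (n : Fin p) (x n) (hxmem n) u (humem _) (by rwa [hguu])
      rw [hguu, ← hxs n] at hk
      exact hk
    have hlim : L ≤ α * L := le_of_tendsto_of_tendsto haT1 hRt hstepu
    nlinarith
  refine ⟨u, Set.mem_iInter.2 humem, hTu, ?_⟩
  -- uniqueness
  intro v hv hTv
  obtain ⟨i, hvi⟩ := Set.mem_iUnion.1 hv
  have hc := hcontr i v hvi u (humem (i + 1))
  rw [hTv, hTu] at hc
  have hguv : G u u v = G v u u := (perm3 v u).symm
  rw [hguv] at hc
  by_cases hc0 : G v u u = 0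
  · exact hDzero v u hc0
  exfalso
  have hcpos : 0 < G v u u := lt_of_le_of_ne (hnn _ _ _) (Ne.symm hc0)
  have hψp : 0 < ψ (G v u u) (G v u u) (G v u u) := by
    rcases lt_or_eq_of_le (hψ.nonneg _ _ _ hcpos.le hcpos.le hcpos.le) with h | h
    · exact h
    · exact absurd ((hψ.eq_zero_iff _ _ _ hcpos.le hcpos.le hcpos.le).1 h.symm).1 hc0
  have hmm : φ (α * G v u u + δ * G v u u) ≤ φ (G v u u) := by
    have harg : α * G v u u + δ * G v u u = (α + δ) * G v u u := by ring
    rw [harg]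
    apply hφ.mono (Set.mem_Ici.2 (by positivity)) (Set.mem_Ici.2 hcpos.le)
    nlinarith
  linarith
end

section
/- Let {A_i}_{i=1}^p be non-empty closed subsets of a complete G-metric space (X,G) and let T : ⋃_{i=1}^p A_i → ⋃_{i=1}^p A_i be a G-cyclic (φ-ψ)-Kannan type contraction, i.e. a cyclical operator for which there exist an altering distance function φ, a function ψ as below, and constants α, β with 0 ≤ 2β < 1 and 0 < α + 2β ≤ 1 such that for every i ∈ {1,…,p}, every x ∈ A_i and all y, z ∈ A_{i+1}, φ(G(Tx,Ty,Tz)) ≤ φ(α·G(x,Tx,Tx) + β·(G(y,Ty,Ty) + G(z,Tz,Tz))) − ψ(G(x,Tx,Tx), G(y,Ty,Ty), G(z,Tz,Tz)). Then T has a unique fixed point u, and u ∈ ⋂_{i=1}^p A_i. -/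
section Helpers

variable {X : Type*} {G : X → X → X → ℝ}

private lemma gpos (hG : IsGMetric G) {a b : X} (h : a ≠ b) : 0 < G a b b := by
  have h1 : G a b b = G b b a := by rw [hG.symm_left a b b, hG.symm_right b a b]
  rw [h1]
  exact hG.pos_of_ne b a h.symm

private lemma geq (hG : IsGMetric G) {a b : X} (h : G a b b = 0) : a = b := by
  by_contra hne
  exact absurd h (ne_of_gt (gpos hG hne))

private lemma gtwo (hG : IsGMetric G) (a b : X) : G a a b ≤ 2 * G a b b := by
  have h1 := hG.rectangle a a b b
  have h2 : G b a b = G a b b := hG.symm_left b a b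
  linarith

private lemma gswap (hG : IsGMetric G) (a b : X) : G a b b ≤ 2 * G b a a := by
  have h1 : G a b b = G b b a := by rw [hG.symm_left a b b, hG.symm_right b a b]
  rw [h1]
  exact gtwo hG b a

private lemma gmid (hG : IsGMetric G) (a b c : X) : G a c c ≤ G a b b + G b c c :=
  hG.rectangle a c c b

private lemma gtri (hG : IsGMetric G) (a b c : X) : G a b c ≤ G a b b + 2 * G b c c := by
  have h1 := hG.rectangle a b c b
  have h2 := gtwo hG b c
  linarith

end Helpers

open Fin.NatCast Fin.CommRing in
set_option maxHeartbeats 2000000 in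
theorem stmt_2 {X : Type*} (G : X → X → X → ℝ) (hG : IsGMetric G)
    (hcompl : GComplete G)
    (p : ℕ) [NeZero p] (A : Fin p → Set X)
    (hne : ∀ i, (A i).Nonempty) (hcl : ∀ i, GClosed G (A i))
    (T : X → X) (hcyc : ∀ i : Fin p, ∀ x ∈ A i, T x ∈ A (i + 1))
    (φ : ℝ → ℝ) (ψ : ℝ → ℝ → ℝ → ℝ)
    (hφ : IsAlteringDistance φ) (hψ : IsPsiFun ψ)
    (α β : ℝ) (hβ0 : 0 ≤ 2 * β) (hβ1 : 2 * β < 1)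
    (hαβ0 : 0 < α + 2 * β) (hαβ1 : α + 2 * β ≤ 1)
    (hcontr : ∀ i : Fin p, ∀ x ∈ A i, ∀ y ∈ A (i + 1), ∀ z ∈ A (i + 1),
      φ (G (T x) (T y) (T z)) ≤
        φ (α * G x (T x) (T x) + β * (G y (T y) (T y) + G z (T z) (T z))) -
          ψ (G x (T x) (T x)) (G y (T y) (T y)) (G z (T z) (T z))) :
    ∃ u ∈ ⋂ i, A i, T u = u ∧ ∀ v ∈ ⋃ i, A i, T v = v → v = u := by
  have hp : 0 < p := Nat.pos_of_ne_zero (NeZero.ne p)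
  -- every fixed point in the union lies in the intersection
  have hfixint : ∀ v, T v = v → v ∈ ⋃ i, A i → v ∈ ⋂ i, A i := by
    intro v hv hvU
    obtain ⟨i0, hvi⟩ := Set.mem_iUnion.1 hvU
    have key : ∀ k : ℕ, v ∈ A (i0 + (k : Fin p)) := by
      intro k
      induction k with
      | zero => simpa using hvi
      | succ k ih =>
        have h1 := hcyc (i0 + (k : Fin p)) v ih
        rw [hv] at h1
        have h2 : ((k + 1 : ℕ) : Fin p) = (k : Fin p) + 1 := by push_cast; ring
        rw [h2, ← add_assoc]
        exact h1
    refine Set.mem_iInter.2 fun i => ?_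
    have h3 := key ((i - i0).val)
    rwa [Fin.cast_val_eq_self, add_sub_cancel] at h3
  -- uniqueness of fixed points in the intersection
  have huniq : ∀ u v, T u = u → u ∈ ⋂ i, A i → T v = v → v ∈ ⋂ i, A i → v = u := by
    intro u v hu huI hv hvI
    have hc := hcontr 0 u (Set.mem_iInter.1 huI 0) v (Set.mem_iInter.1 hvI (0 + 1)) v
      (Set.mem_iInter.1 hvI (0 + 1))
    rw [hu, hv] at hc
    have h0u : G u u u = 0 := hG.eq_zero u
    have h0v : G v v v = 0 := hG.eq_zero v
    rw [h0u, h0v] at hc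
    have hφ0 : φ (α * 0 + β * (0 + 0)) = 0 := by
      have : α * 0 + β * (0 + 0) = 0 := by ring
      rw [this]
      exact (hφ.eq_zero_iff 0 le_rfl).2 rfl
    have hψ0 : ψ 0 0 0 = 0 := (hψ.eq_zero_iff 0 0 0 le_rfl le_rfl le_rfl).2 ⟨rfl, rfl, rfl⟩
    rw [hφ0, hψ0] at hc
    have hnn : 0 ≤ φ (G u v v) := hφ.nonneg _ (hG.nonneg _ _ _)
    have hzero : φ (G u v v) = 0 := le_antisymm (by linarith) hnn
    have hGz : G u v v = 0 := (hφ.eq_zero_iff _ (hG.nonneg _ _ _)).1 hzero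
    exact (geq hG hGz).symm
  -- reduce to finding a fixed point in the union
  suffices h : ∃ u, T u = u ∧ u ∈ ⋃ i, A i by
    obtain ⟨u, hTu, huU⟩ := h
    have huI := hfixint u hTu huU
    exact ⟨u, huI, hTu, fun v hvU hTv => huniq u v hTu huI hTv (hfixint v hTv hvU)⟩
  -- the Picard sequence
  obtain ⟨a0, ha0⟩ := hne 0
  obtain ⟨x, hx0, hxs⟩ : ∃ x : ℕ → X, x 0 = a0 ∧ ∀ n, x (n + 1) = T (x n) :=
    ⟨fun n => T^[n] a0, rfl, fun n => Function.iterate_succ_apply' T n a0⟩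
  have hmem : ∀ n : ℕ, x n ∈ A (n : Fin p) := by
    intro n
    induction n with
    | zero => rw [hx0]; simpa using ha0
    | succ n ih =>
      rw [hxs]
      have h1 := hcyc (n : Fin p) (x n) ih
      have h2 : ((n + 1 : ℕ) : Fin p) = (n : Fin p) + 1 := by push_cast; ring
      rwa [h2]
  obtain ⟨d, hdd⟩ : ∃ d : ℕ → ℝ, ∀ n, d n = G (x n) (x (n + 1)) (x (n + 1)) :=
    ⟨_, fun n => rfl⟩
  have hd0 : ∀ n, 0 ≤ d n := fun n => (hdd n) ▸ hG.nonneg _ _ _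
  -- degenerate case : some step is zero
  by_cases hzero : ∃ n, d n = 0
  · obtain ⟨n, hn⟩ := hzero
    rw [hdd] at hn
    have hfix : x n = x (n + 1) := geq hG hn
    rw [hxs] at hfix
    exact ⟨x n, hfix.symm, Set.mem_iUnion.2 ⟨_, hmem n⟩⟩
  push_neg at hzero
  have hdpos : ∀ n, 0 < d n := fun n => lt_of_le_of_ne (hd0 n) (Ne.symm (hzero n))
  -- key cross estimate
  have hkey : ∀ n m : ℕ, ((m : Fin p) = (n : Fin p) + 1) →
      0 ≤ α * d n + 2 * β * d m →
      G (x (n + 1)) (x (m + 1)) (x (m + 1)) ≤ α * d n + 2 * β * d m := by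
    intro n m hnm hR
    by_contra hlt
    push_neg at hlt
    have hym : x m ∈ A ((n : Fin p) + 1) := by rw [← hnm]; exact hmem m
    have hc := hcontr (n : Fin p) (x n) (hmem n) (x m) hym (x m) hym
    rw [← hxs n, ← hxs m, ← hdd n, ← hdd m] at hc
    have harg : α * d n + β * (d m + d m) = α * d n + 2 * β * d m := by ring
    rw [harg] at hc
    have hL0 : (0:ℝ) ≤ G (x (n + 1)) (x (m + 1)) (x (m + 1)) := hG.nonneg _ _ _
    have hmono : φ (α * d n + 2 * β * d m) ≤ φ (G (x (n + 1)) (x (m + 1)) (x (m + 1))) :=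
      hφ.mono (Set.mem_Ici.2 hR) (Set.mem_Ici.2 hL0) hlt.le
    have hψ0 : ψ (d n) (d m) (d m) ≤ 0 := by linarith
    have hψ0' : ψ (d n) (d m) (d m) = 0 :=
      le_antisymm hψ0 (hψ.nonneg _ _ _ (hd0 n) (hd0 m) (hd0 m))
    have := ((hψ.eq_zero_iff _ _ _ (hd0 n) (hd0 m) (hd0 m)).1 hψ0').1
    exact (hzero n) this
  -- the tail chain estimate
  have htail : ∀ t q : ℕ, G (x q) (x (q + t)) (x (q + t)) ≤
      ∑ j ∈ Finset.range t, d (q + j) := by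
    intro t
    induction t with
    | zero => intro q; simp [hG.eq_zero]
    | succ t ih =>
      intro q
      have h1 : q + (t + 1) = (q + 1) + t := by omega
      have h2 := gmid hG (x q) (x (q + 1)) (x ((q + 1) + t))
      have h3 := ih (q + 1)
      have h4 : ∑ j ∈ Finset.range (t + 1), d (q + j)
          = d q + ∑ j ∈ Finset.range t, d ((q + 1) + j) := by
        rw [Finset.sum_range_succ']
        have h5 : ∑ j ∈ Finset.range t, d (q + (j + 1))
            = ∑ j ∈ Finset.range t, d ((q + 1) + j) :=
          Finset.sum_congr rfl fun j _ => by rw [show q + (j + 1) = (q + 1) + j from by omega]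
        rw [h5, Nat.add_zero]
        exact add_comm _ _
      rw [h1, h4]
      calc G (x q) (x ((q + 1) + t)) (x ((q + 1) + t))
          ≤ G (x q) (x (q + 1)) (x (q + 1)) +
            G (x (q + 1)) (x ((q + 1) + t)) (x ((q + 1) + t)) := h2
        _ ≤ d q + ∑ j ∈ Finset.range t, d ((q + 1) + j) := by
            rw [hdd]; exact add_le_add le_rfl h3
  -- smallness of G (x n) (x m) (x m) for n ≤ m both large
  have hsmall : ∀ ε > 0, ∃ N, ∀ n m, N ≤ n → N ≤ m → n ≤ m →
      G (x n) (x m) (x m) < ε := by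
    have hcastS : ∀ n : ℕ, ((n + 1 : ℕ) : Fin p) = (n : Fin p) + 1 := fun n => by
      push_cast; ring
    rcases lt_or_ge α 0 with hneg | hαnn
    · -- geometric case : α < 0
      have hb : 0 < 2 * β := by linarith
      set k := -α / (2 * β) with hkdef
      have hk0 : 0 ≤ k := div_nonneg (by linarith) hb.le
      have hk1 : k < 1 := (div_lt_one hb).2 (by linarith)
      have h1k : 0 < 1 - k := by linarith
      have hstep : ∀ n, d (n + 1) ≤ k * d n := by
        intro n
        rcases le_or_gt 0 (α * d n + 2 * β * d (n + 1)) with hR | hR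
        · have h1 := hkey n (n + 1) (hcastS n) hR
          rw [← hdd (n + 1)] at h1
          nlinarith [hdpos n, hdpos (n + 1)]
        · rw [hkdef, div_mul_eq_mul_div, le_div_iff₀ hb]
          linarith
      have hgeo : ∀ n, d n ≤ k ^ n * d 0 := by
        intro n
        induction n with
        | zero => simp
        | succ n ih =>
          calc d (n + 1) ≤ k * d n := hstep n
            _ ≤ k * (k ^ n * d 0) := mul_le_mul_of_nonneg_left ih hk0
            _ = k ^ (n + 1) * d 0 := by ring
      have hgsum : ∀ t, (1 - k) * ∑ j ∈ Finset.range t, k ^ j = 1 - k ^ t := by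
        intro t
        induction t with
        | zero => simp
        | succ t ih => rw [Finset.sum_range_succ, mul_add, ih]; ring
      intro ε hε
      have htends : Filter.Tendsto (fun n => k ^ n * d 0 / (1 - k)) Filter.atTop (nhds 0) := by
        have h2 := (tendsto_pow_atTop_nhds_zero_of_lt_one hk0 hk1).mul_const (d 0)
        have h3 := h2.div_const (1 - k)
        simpa using h3
      obtain ⟨N, hN⟩ := Filter.eventually_atTop.1 ((tendsto_order.1 htends).2 ε hε)
      refine ⟨N, fun n m hn hm hnm => ?_⟩
      have hchain := htail (m - n) n
      rw [Nat.add_sub_cancel' hnm] at hchain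
      have hsum : ∑ j ∈ Finset.range (m - n), d (n + j) ≤ k ^ n * d 0 / (1 - k) := by
        have hterm : ∀ j ∈ Finset.range (m - n), d (n + j) ≤ k ^ n * d 0 * k ^ j := by
          intro j _
          have h4 := hgeo (n + j)
          rw [pow_add] at h4
          calc d (n + j) ≤ k ^ n * k ^ j * d 0 := h4
            _ = k ^ n * d 0 * k ^ j := by ring
        calc ∑ j ∈ Finset.range (m - n), d (n + j)
            ≤ ∑ j ∈ Finset.range (m - n), k ^ n * d 0 * k ^ j := Finset.sum_le_sum hterm
          _ = k ^ n * d 0 * ∑ j ∈ Finset.range (m - n), k ^ j := by rw [Finset.mul_sum]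
          _ ≤ k ^ n * d 0 * (1 / (1 - k)) := by
              apply mul_le_mul_of_nonneg_left ?_ (mul_nonneg (pow_nonneg hk0 n) (hd0 0))
              rw [le_div_iff₀ h1k, mul_comm, hgsum]
              have := pow_nonneg hk0 (m - n)
              linarith
          _ = k ^ n * d 0 / (1 - k) := by ring
      have hmono : k ^ n * d 0 / (1 - k) ≤ k ^ N * d 0 / (1 - k) := by
        have hpow : k ^ n ≤ k ^ N := pow_le_pow_of_le_one hk0 hk1.le hn
        have := mul_le_mul_of_nonneg_right hpow (hd0 0)
        exact (div_le_div_iff_of_pos_right h1k).2 this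
      calc G (x n) (x m) (x m) ≤ ∑ j ∈ Finset.range (m - n), d (n + j) := hchain
        _ ≤ k ^ n * d 0 / (1 - k) := hsum
        _ ≤ k ^ N * d 0 / (1 - k) := hmono
        _ < ε := hN N le_rfl
    · -- Kannan case : 0 ≤ α
      have hR0 : ∀ n m : ℕ, 0 ≤ α * d n + 2 * β * d m := fun n m => by
        nlinarith [hd0 n, hd0 m]
      have hstep : ∀ n, d (n + 1) ≤ α * d n + 2 * β * d (n + 1) := by
        intro n
        have h1 := hkey n (n + 1) (hcastS n) (hR0 n (n + 1))
        rwa [← hdd (n + 1)] at h1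
      have hanti : ∀ n, d (n + 1) ≤ d n := by
        intro n
        have := hstep n
        nlinarith [hd0 n]
      have hAnti : Antitone d := antitone_nat_of_succ_le hanti
      have hbdd : BddBelow (Set.range d) := ⟨0, fun y ⟨n, hn⟩ => hn ▸ hd0 n⟩
      have htendr : Filter.Tendsto d Filter.atTop (nhds (⨅ n, d n)) :=
        tendsto_atTop_ciInf hAnti hbdd
      set r := ⨅ n, d n with hrdef
      have hr0 : 0 ≤ r := le_ciInf hd0
      have hφanti : Antitone fun n => φ (d n) := antitone_nat_of_succ_le fun n =>
        hφ.mono (Set.mem_Ici.2 (hd0 _)) (Set.mem_Ici.2 (hd0 _)) (hanti n)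
      have hφbdd : BddBelow (Set.range fun n => φ (d n)) :=
        ⟨0, fun y ⟨n, hn⟩ => hn ▸ hφ.nonneg _ (hd0 n)⟩
      have htendφ := tendsto_atTop_ciInf hφanti hφbdd
      have hψle : ∀ n, ψ (d n) (d (n + 1)) (d (n + 1)) ≤ φ (d n) - φ (d (n + 1)) := by
        intro n
        have hym : x (n + 1) ∈ A ((n : Fin p) + 1) := by rw [← hcastS n]; exact hmem (n + 1)
        have hc := hcontr (n : Fin p) (x n) (hmem n) (x (n + 1)) hym (x (n + 1)) hym
        rw [← hxs n, ← hxs (n + 1), ← hdd n, ← hdd (n + 1)] at hc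
        have e1 : α * d n + β * (d (n + 1) + d (n + 1)) = α * d n + 2 * β * d (n + 1) := by
          ring
        rw [e1] at hc
        have hle : α * d n + 2 * β * d (n + 1) ≤ d n := by
          nlinarith [hanti n, hd0 n, hd0 (n + 1)]
        have hm := hφ.mono (Set.mem_Ici.2 (hR0 n (n + 1))) (Set.mem_Ici.2 (hd0 n)) hle
        linarith
      have hψ0 : Filter.Tendsto (fun n => ψ (d n) (d (n + 1)) (d (n + 1)))
          Filter.atTop (nhds 0) := by
        have hsub : Filter.Tendsto (fun n => φ (d n) - φ (d (n + 1))) Filter.atTop (nhds 0) := by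
          have h2 : Filter.Tendsto (fun n => φ (d (n + 1))) Filter.atTop
              (nhds (⨅ n, φ (d n))) := htendφ.comp (Filter.tendsto_add_atTop_nat 1)
          have h3 := htendφ.sub h2
          simpa using h3
        exact squeeze_zero (fun n => hψ.nonneg _ _ _ (hd0 _) (hd0 _) (hd0 _)) hψle hsub
      have hψr : Filter.Tendsto (fun n => ψ (d n) (d (n + 1)) (d (n + 1)))
          Filter.atTop (nhds (ψ r r r)) := by
        have hmemS : ((r, r, r) : ℝ × ℝ × ℝ) ∈
            (Set.Ici 0 ×ˢ Set.Ici 0 ×ˢ Set.Ici 0 : Set (ℝ × ℝ × ℝ)) := ⟨hr0, hr0, hr0⟩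
        have hcw := hψ.continuous (r, r, r) hmemS
        have htend1 : Filter.Tendsto (fun n => d (n + 1)) Filter.atTop (nhds r) :=
          htendr.comp (Filter.tendsto_add_atTop_nat 1)
        have hseq : Filter.Tendsto (fun n => ((d n, d (n + 1), d (n + 1)) : ℝ × ℝ × ℝ))
            Filter.atTop (nhdsWithin (r, r, r) (Set.Ici 0 ×ˢ Set.Ici 0 ×ˢ Set.Ici 0)) := by
          rw [tendsto_nhdsWithin_iff]
          exact ⟨htendr.prodMk_nhds (htend1.prodMk_nhds htend1),
            Filter.Eventually.of_forall fun n => ⟨hd0 n, hd0 (n + 1), hd0 (n + 1)⟩⟩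
        exact hcw.tendsto.comp hseq
      have hrr : ψ r r r = 0 := tendsto_nhds_unique hψr hψ0
      have hr : r = 0 := ((hψ.eq_zero_iff r r r hr0 hr0 hr0).1 hrr).1
      have hdto0 : Filter.Tendsto d Filter.atTop (nhds 0) := hr ▸ htendr
      intro ε hε
      have hεp : 0 < ε / ((p : ℝ) + 2) := by positivity
      obtain ⟨M, hM⟩ := Filter.eventually_atTop.1 ((tendsto_order.1 hdto0).2 _ hεp)
      have hdM : ∀ j, M ≤ j → d j ≤ d M := fun j hj => hAnti hj
      refine ⟨M + 2, fun n m hn hm hnm => ?_⟩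
      rcases eq_or_lt_of_le hnm with rfl | hlt
      · simpa [hG.eq_zero] using hε
      obtain ⟨n', rfl⟩ : ∃ n', n = n' + 1 := ⟨n - 1, by omega⟩
      obtain ⟨c, hdiv, r', hrlt, hmod⟩ :
          ∃ c, p ∣ c ∧ ∃ r', r' < p ∧ c + r' = m - (n' + 1) - 1 :=
        ⟨p * ((m - (n' + 1) - 1) / p), ⟨_, rfl⟩, (m - (n' + 1) - 1) % p,
          Nat.mod_lt _ hp, Nat.div_add_mod _ _⟩
      have hqm : (n' + c + 2) + r' = m := by omega
      have hc0 : ((c : ℕ) : Fin p) = 0 := by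
        rw [Fin.natCast_eq_zero]; exact hdiv
      have hcast2 : ((n' + c + 1 : ℕ) : Fin p) = (n' : Fin p) + 1 := by
        push_cast [hc0]; ring
      have hop := hkey n' (n' + c + 1) hcast2 (hR0 _ _)
      have hdn' : d n' ≤ d M := hdM n' (by omega)
      have hdq : d (n' + c + 1) ≤ d M := hdM _ (by omega)
      have hopb : G (x (n' + 1)) (x (n' + c + 2)) (x (n' + c + 2)) ≤ 2 * d M := by
        have h5 : α * d n' + 2 * β * d (n' + c + 1) ≤ d n' + d (n' + c + 1) := by
          nlinarith [hd0 n', hd0 (n' + c + 1)]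
        have h6 : (n' + c + 1) + 1 = n' + c + 2 := by omega
        rw [h6] at hop
        linarith
      have htl := htail r' (n' + c + 2)
      rw [hqm] at htl
      have htlb : ∑ j ∈ Finset.range r', d ((n' + c + 2) + j) ≤ (p : ℝ) * d M := by
        have h7 : ∀ j ∈ Finset.range r', d ((n' + c + 2) + j) ≤ d M := fun j _ =>
          hdM _ (by omega)
        calc ∑ j ∈ Finset.range r', d ((n' + c + 2) + j)
            ≤ ∑ _j ∈ Finset.range r', d M := Finset.sum_le_sum h7
          _ = (r' : ℝ) * d M := by rw [Finset.sum_const, Finset.card_range, nsmul_eq_mul]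
          _ ≤ (p : ℝ) * d M := by
              have : (r' : ℝ) ≤ (p : ℝ) := Nat.cast_le.2 hrlt.le
              have := hd0 M
              nlinarith
      have hmid := gmid hG (x (n' + 1)) (x (n' + c + 2)) (x m)
      have hdMε : d M < ε / ((p : ℝ) + 2) := hM M le_rfl
      have hfin : ((p : ℝ) + 2) * (ε / ((p : ℝ) + 2)) = ε := by
        field_simp
      have hdM0 : 0 ≤ d M := hd0 M
      calc G (x (n' + 1)) (x m) (x m)
          ≤ G (x (n' + 1)) (x (n' + c + 2)) (x (n' + c + 2)) +
            G (x (n' + c + 2)) (x m) (x m) := hmid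
        _ ≤ 2 * d M + (p : ℝ) * d M := add_le_add hopb (le_trans htl htlb)
        _ = ((p : ℝ) + 2) * d M := by ring
        _ < ((p : ℝ) + 2) * (ε / ((p : ℝ) + 2)) := by
            have hp2 : (0 : ℝ) < (p : ℝ) + 2 := by positivity
            exact mul_lt_mul_of_pos_left hdMε hp2
        _ = ε := hfin

  -- Cauchy
  have hcauchy : GCauchySeq G x := by
    intro ε hε
    obtain ⟨N, hN⟩ := hsmall (ε / 6) (by linarith)
    refine ⟨N, fun n hn m hm l hl => ?_⟩
    have hg : ∀ a b, N ≤ a → N ≤ b → G (x a) (x b) (x b) < 2 * (ε / 6) := by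
      intro a b ha hb
      rcases le_or_gt a b with hab | hab
      · have := hN a b ha hb hab
        linarith
      · have h1 := gswap hG (x a) (x b)
        have h2 := hN b a hb ha hab.le
        linarith
    have h1 := gtri hG (x n) (x m) (x l)
    have h2 := hg n m hn hm
    have h3 := hg m l hm hl
    linarith
  obtain ⟨u, hu⟩ := hcompl x hcauchy
  -- d tends to 0
  have hdto : ∀ ε > 0, ∃ N, ∀ n, N ≤ n → d n < ε := by
    intro ε hε
    obtain ⟨N, hN⟩ := hcauchy ε hε
    refine ⟨N, fun n hn => ?_⟩
    rw [hdd]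
    exact hN n hn (n + 1) (by omega) (n + 1) (by omega)
  -- u belongs to every A i
  have huA : ∀ i, u ∈ A i := by
    intro i
    refine hcl i (fun n => x (n * p + i.val)) (fun n => ?_) u ?_
    · have hcast : ((n * p + i.val : ℕ) : Fin p) = i := by
        push_cast
        rw [Fin.natCast_self]
        simp [Fin.cast_val_eq_self]
      have hm1 := hmem (n * p + i.val)
      rwa [hcast] at hm1
    · intro ε hε
      obtain ⟨N, hN⟩ := hu ε hε
      refine ⟨N, fun n hn m hm => ?_⟩
      have hnp : ∀ a : ℕ, a ≤ a * p + i.val := fun a =>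
        le_trans (Nat.le_mul_of_pos_right a hp) (Nat.le_add_right _ _)
      exact hN _ (le_trans hn (hnp n)) _ (le_trans hm (hnp m))
  -- T u = u
  have hTu : T u = u := by
    by_contra hne'
    have hneq : u ≠ T u := fun h => hne' h.symm
    have he : 0 < G u (T u) (T u) := gpos hG hneq
    set e := G u (T u) (T u) with hedef
    have hβe : 0 < 1 - 2 * β := by linarith
    have hε0 : 0 < (1 - 2 * β) * e / 4 := by positivity
    have harg : ∃ N2, ∀ n, N2 ≤ n → 0 ≤ α * d n + 2 * β * e := by
      rcases le_or_gt 0 α with hα | hα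
      · exact ⟨0, fun n _ => by nlinarith [hd0 n, he]⟩
      · have hb : 0 < 2 * β := by linarith
        have hτ : 0 < 2 * β * e / (-α) := div_pos (by nlinarith) (by linarith)
        obtain ⟨N2, hN2⟩ := hdto _ hτ
        refine ⟨N2, fun n hn => ?_⟩
        have h1 := hN2 n hn
        rw [lt_div_iff₀ (by linarith : (0:ℝ) < -α)] at h1
        nlinarith
    obtain ⟨N2, hN2⟩ := harg
    obtain ⟨N1, hN1⟩ := hdto ((1 - 2 * β) * e / 4) hε0
    obtain ⟨N3, hN3⟩ := hu ((1 - 2 * β) * e / 4) hε0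
    set n := max (max N1 N2) N3 with hndef
    have hn1 : N1 ≤ n := le_max_of_le_left (le_max_left _ _)
    have hn2 : N2 ≤ n := le_max_of_le_left (le_max_right _ _)
    have hn3 : N3 ≤ n + 1 := le_trans (le_max_right _ _) (Nat.le_succ n)
    have hAc : u ∈ A ((n : Fin p) + 1) := huA _
    have hc := hcontr (n : Fin p) (x n) (hmem n) u hAc u hAc
    rw [← hxs n, ← hdd n, ← hedef] at hc
    have harg2 : α * d n + β * (e + e) = α * d n + 2 * β * e := by ring
    rw [harg2] at hc
    have hR : 0 ≤ α * d n + 2 * β * e := hN2 n hn2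
    have hL : G (x (n + 1)) (T u) (T u) ≤ α * d n + 2 * β * e := by
      by_contra hlt
      push_neg at hlt
      have hmono := hφ.mono (Set.mem_Ici.2 hR) (Set.mem_Ici.2 (hG.nonneg _ _ _)) hlt.le
      have h0 : ψ (d n) e e ≤ 0 := by linarith
      have h0' : ψ (d n) e e = 0 := le_antisymm h0 (hψ.nonneg _ _ _ (hd0 n) he.le he.le)
      have := ((hψ.eq_zero_iff _ _ _ (hd0 n) he.le he.le).1 h0').2.1
      exact absurd this (ne_of_gt he)
    have hmid : e ≤ G u (x (n + 1)) (x (n + 1)) + G (x (n + 1)) (T u) (T u) :=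
      gmid hG u (x (n + 1)) (T u)
    have hGu : G u (x (n + 1)) (x (n + 1)) < (1 - 2 * β) * e / 4 := hN3 (n + 1) hn3 (n + 1) hn3
    have hdn : d n < (1 - 2 * β) * e / 4 := hN1 n hn1
    have hαd : α * d n ≤ d n := by nlinarith [hd0 n]
    have hpos : 0 < (1 - 2 * β) * e := mul_pos hβe he
    linarith
  exact ⟨u, hTu, Set.mem_iUnion.2 ⟨0, huA 0⟩⟩
end

section
/- Let (X,d) be a complete metric space and T : X → X a map for which there exist real numbers α, β, γ with 0 ≤ α < 1 and 0 ≤ β, γ < 1/2 such that for all x, y ∈ X at least one of the following holds: (i) d(Tx,Ty) ≤ α·d(x,y); (ii) d(Tx,Ty) ≤ β·[d(x,Tx) + d(y,Ty)]; (iii) d(Tx,Ty) ≤ γ·[d(x,Ty) + d(y,Tx)]. Then T has a unique fixed point p, and for every x₀ ∈ X the Picard iteration x_{n+1} = T x_n converges to p. -/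
/-!
Each of the three Zamfirescu alternatives, combined with the triangle inequality, yields
`d(Tx, Ty) ≤ δ d(x, y) + 2δ d(y, Tx)` with `δ = max(α, β/(1-β), γ/(1-γ)) < 1`, i.e. `T` is a
Berinde almost contraction. Taking `y = Tx` shows that Picard iterates move geometrically, so every
Picard sequence is Cauchy; taking `x = xₙ`, `y = p` shows `T xₙ → T p` at its limit `p`, which is
therefore fixed. Two fixed points `p, q` satisfy `d(p, q) ≤ α d(p, q)`, `≤ 0` or `≤ 2γ d(p, q)`,
so they coincide.
-/

open Filter Topology Function

section AlmostContraction

variable {X : Type*} [MetricSpace X]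

def IsAlmostContraction (T : X → X) (δ L : ℝ) : Prop :=
  ∀ x y, dist (T x) (T y) ≤ δ * dist x y + L * dist y (T x)

variable {T : X → X} {δ L : ℝ}

theorem IsAlmostContraction.dist_apply_apply_le (hT : IsAlmostContraction T δ L) (x : X) :
    dist (T x) (T (T x)) ≤ δ * dist x (T x) := by
  simpa using hT x (T x)

theorem IsAlmostContraction.dist_iterate_succ_le (hT : IsAlmostContraction T δ L)
    (hδ : 0 ≤ δ) (x : X) (n : ℕ) :
    dist (T^[n] x) (T^[n + 1] x) ≤ dist x (T x) * δ ^ n := by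
  induction n with
  | zero => simp
  | succ n ih =>
    calc dist (T^[n + 1] x) (T^[n + 2] x)
        = dist (T (T^[n] x)) (T (T (T^[n] x))) := by
          simp only [iterate_succ_apply']
      _ ≤ δ * dist (T^[n] x) (T^[n + 1] x) := by
          simpa only [iterate_succ_apply'] using hT.dist_apply_apply_le (T^[n] x)
      _ ≤ δ * (dist x (T x) * δ ^ n) := by gcongr
      _ = dist x (T x) * δ ^ (n + 1) := by ring

theorem IsAlmostContraction.cauchySeq_iterate (hT : IsAlmostContraction T δ L)
    (hδ0 : 0 ≤ δ) (hδ1 : δ < 1) (x : X) : CauchySeq fun n ↦ T^[n] x :=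
  cauchySeq_of_le_geometric δ _ hδ1 (hT.dist_iterate_succ_le hδ0 x)

theorem IsAlmostContraction.isFixedPt_of_tendsto_iterate (hT : IsAlmostContraction T δ L)
    {x p : X} (hp : Tendsto (fun n ↦ T^[n] x) atTop (𝓝 p)) : IsFixedPt T p := by
  have hp_succ : Tendsto (fun n ↦ T (T^[n] x)) atTop (𝓝 p) := by
    simpa only [iterate_succ_apply'] using (tendsto_add_atTop_iff_nat 1).2 hp
  have hTp : Tendsto (fun n ↦ T (T^[n] x)) atTop (𝓝 (T p)) := by
    rw [tendsto_iff_dist_tendsto_zero]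
    have hbound : Tendsto (fun n ↦ δ * dist (T^[n] x) p + L * dist p (T (T^[n] x)))
        atTop (𝓝 0) := by
      have h₁ := (tendsto_iff_dist_tendsto_zero.1 hp).const_mul δ
      have h₂ := (tendsto_iff_dist_tendsto_zero.1 hp_succ).const_mul L
      simp_rw [dist_comm p] at h₂ ⊢
      simpa using h₁.add h₂
    exact squeeze_zero (fun _ ↦ dist_nonneg) (fun n ↦ hT _ _) hbound
  exact tendsto_nhds_unique hTp hp_succ

theorem IsAlmostContraction.exists_isFixedPt_tendsto_iterate [CompleteSpace X]
    (hT : IsAlmostContraction T δ L) (hδ0 : 0 ≤ δ) (hδ1 : δ < 1) (x : X) :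
    ∃ p, IsFixedPt T p ∧ Tendsto (fun n ↦ T^[n] x) atTop (𝓝 p) := by
  obtain ⟨p, hp⟩ := cauchySeq_tendsto_of_complete (hT.cauchySeq_iterate hδ0 hδ1 x)
  exact ⟨p, hT.isFixedPt_of_tendsto_iterate hp, hp⟩

end AlmostContraction

section Zamfirescu

variable {X : Type*} [MetricSpace X]

def IsZamfirescu (T : X → X) (α β γ : ℝ) : Prop :=
  ∀ x y : X,
    dist (T x) (T y) ≤ α * dist x y ∨
    dist (T x) (T y) ≤ β * (dist x (T x) + dist y (T y)) ∨
    dist (T x) (T y) ≤ γ * (dist x (T y) + dist y (T x))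

variable {T : X → X} {α β γ : ℝ}

theorem dist_le_of_kannan {x y : X} (hβ0 : 0 ≤ β) (hβ1 : β < 1)
    (h : dist (T x) (T y) ≤ β * (dist x (T x) + dist y (T y))) :
    dist (T x) (T y) ≤ β / (1 - β) * dist x y + 2 * (β / (1 - β)) * dist y (T x) := by
  rw [show β / (1 - β) * dist x y + 2 * (β / (1 - β)) * dist y (T x)
      = (β * dist x y + 2 * β * dist y (T x)) / (1 - β) by ring, le_div_iff₀ (by linarith)]
  nlinarith [dist_triangle x y (T x), dist_triangle y (T x) (T y)]

theorem dist_le_of_chatterjea {x y : X} (hγ0 : 0 ≤ γ) (hγ1 : γ < 1)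
    (h : dist (T x) (T y) ≤ γ * (dist x (T y) + dist y (T x))) :
    dist (T x) (T y) ≤ γ / (1 - γ) * dist x y + 2 * (γ / (1 - γ)) * dist y (T x) := by
  rw [show γ / (1 - γ) * dist x y + 2 * (γ / (1 - γ)) * dist y (T x)
      = (γ * dist x y + 2 * γ * dist y (T x)) / (1 - γ) by ring, le_div_iff₀ (by linarith)]
  nlinarith [dist_triangle4 x y (T x) (T y)]

theorem IsZamfirescu.isAlmostContraction (hT : IsZamfirescu T α β γ)
    (hβ0 : 0 ≤ β) (hβ1 : β < 1) (hγ0 : 0 ≤ γ) (hγ1 : γ < 1) :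
    IsAlmostContraction T (max α (max (β / (1 - β)) (γ / (1 - γ))))
      (2 * max α (max (β / (1 - β)) (γ / (1 - γ)))) := by
  intro x y
  set δ := max α (max (β / (1 - β)) (γ / (1 - γ)))
  have hβδ : β / (1 - β) ≤ δ := le_max_of_le_right (le_max_left _ _)
  have hγδ : γ / (1 - γ) ≤ δ := le_max_of_le_right (le_max_right _ _)
  have hδ0 : 0 ≤ δ := (div_nonneg hβ0 (by linarith)).trans hβδ
  rcases hT x y with h | h | h
  · calc dist (T x) (T y) ≤ α * dist x y := h
      _ ≤ δ * dist x y := by gcongr; exact le_max_left _ _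
      _ ≤ δ * dist x y + 2 * δ * dist y (T x) := le_add_of_nonneg_right (by positivity)
  · calc dist (T x) (T y)
        ≤ β / (1 - β) * dist x y + 2 * (β / (1 - β)) * dist y (T x) :=
          dist_le_of_kannan hβ0 hβ1 h
      _ ≤ δ * dist x y + 2 * δ * dist y (T x) := by gcongr
  · calc dist (T x) (T y)
        ≤ γ / (1 - γ) * dist x y + 2 * (γ / (1 - γ)) * dist y (T x) :=
          dist_le_of_chatterjea hγ0 hγ1 h
      _ ≤ δ * dist x y + 2 * δ * dist y (T x) := by gcongr

theorem IsZamfirescu.exists_isAlmostContraction (hT : IsZamfirescu T α β γ) (hα1 : α < 1)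
    (hβ0 : 0 ≤ β) (hβ1 : β < 1 / 2) (hγ0 : 0 ≤ γ) (hγ1 : γ < 1 / 2) :
    ∃ δ L, 0 ≤ δ ∧ δ < 1 ∧ IsAlmostContraction T δ L := by
  refine ⟨_, _, ?_, ?_, hT.isAlmostContraction hβ0 (by linarith) hγ0 (by linarith)⟩
  · exact le_max_of_le_right (le_max_of_le_left (div_nonneg hβ0 (by linarith)))
  · exact max_lt hα1 (max_lt ((div_lt_one (by linarith)).2 (by linarith))
      ((div_lt_one (by linarith)).2 (by linarith)))

theorem IsZamfirescu.eq_of_isFixedPt (hT : IsZamfirescu T α β γ) (hα1 : α < 1)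
    (hγ1 : γ < 1 / 2) {p q : X} (hp : IsFixedPt T p) (hq : IsFixedPt T q) : p = q := by
  have hpq := hT p q
  rw [hp.eq, hq.eq, dist_self, dist_self, dist_comm q p] at hpq
  refine dist_le_zero.1 ?_
  rcases hpq with h | h | h <;> nlinarith [dist_nonneg (x := p) (y := q)]

end Zamfirescu

theorem stmt_4_general {X : Type*} [MetricSpace X] [CompleteSpace X] [Nonempty X]
    (T : X → X) (α β γ : ℝ)
    (hα1 : α < 1)
    (hβ0 : 0 ≤ β) (hβ1 : β < 1 / 2)
    (hγ0 : 0 ≤ γ) (hγ1 : γ < 1 / 2)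
    (h : ∀ x y : X,
      dist (T x) (T y) ≤ α * dist x y ∨
      dist (T x) (T y) ≤ β * (dist x (T x) + dist y (T y)) ∨
      dist (T x) (T y) ≤ γ * (dist x (T y) + dist y (T x))) :
    ∃ p : X, T p = p ∧ (∀ q : X, T q = q → q = p) ∧
      ∀ x₀ : X, Filter.Tendsto (fun n => T^[n] x₀) Filter.atTop (nhds p) := by
  obtain ⟨δ, L, hδ0, hδ1, hT⟩ :=
    IsZamfirescu.exists_isAlmostContraction h hα1 hβ0 hβ1 hγ0 hγ1
  have huniq : ∀ p q, IsFixedPt T p → IsFixedPt T q → p = q :=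
    fun _ _ ↦ IsZamfirescu.eq_of_isFixedPt h hα1 hγ1
  obtain ⟨p, hp, -⟩ := hT.exists_isFixedPt_tendsto_iterate hδ0 hδ1 (Classical.arbitrary X)
  refine ⟨p, hp, fun q hq ↦ huniq q p hq hp, fun x₀ ↦ ?_⟩
  obtain ⟨q, hq, hx₀⟩ := hT.exists_isFixedPt_tendsto_iterate hδ0 hδ1 x₀
  rwa [huniq q p hq hp] at hx₀

theorem stmt_4 {X : Type*} [MetricSpace X] [CompleteSpace X] [Nonempty X]
    (T : X → X) (α β γ : ℝ)
    (hα0 : 0 ≤ α) (hα1 : α < 1)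
    (hβ0 : 0 ≤ β) (hβ1 : β < 1 / 2)
    (hγ0 : 0 ≤ γ) (hγ1 : γ < 1 / 2)
    (h : ∀ x y : X,
      dist (T x) (T y) ≤ α * dist x y ∨
      dist (T x) (T y) ≤ β * (dist x (T x) + dist y (T y)) ∨
      dist (T x) (T y) ≤ γ * (dist x (T y) + dist y (T x))) :
    ∃ p : X, T p = p ∧ (∀ q : X, T q = q → q = p) ∧
      ∀ x₀ : X, Filter.Tendsto (fun n => T^[n] x₀) Filter.atTop (nhds p) :=
  stmt_4_general T α β γ hα1 hβ0 hβ1 hγ0 hγ1 h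
end

section
/- Let (X,d) be a complete metric space and T : X → X a Kannan contraction, i.e. there exists α ∈ [0, 1/2) such that d(Tx,Ty) ≤ α·[d(x,Tx) + d(y,Ty)] for all x, y ∈ X. Then T has a unique fixed point. -/
theorem stmt_5 {X : Type*} [MetricSpace X] [CompleteSpace X] [Nonempty X]
    (T : X → X) (α : ℝ) (hα0 : 0 ≤ α) (hα1 : α < 1 / 2)
    (h : ∀ x y : X, dist (T x) (T y) ≤ α * (dist x (T x) + dist y (T y))) :
    ∃! u : X, T u = u := by
  obtain ⟨x0⟩ := ‹Nonempty X›
  set r : ℝ := α / (1 - α) with hr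
  have hα1' : α < 1 := by linarith
  have h1α : (0:ℝ) < 1 - α := by linarith
  have hr0 : 0 ≤ r := div_nonneg hα0 h1α.le
  have hr1 : r < 1 := by
    rw [div_lt_one h1α]; linarith
  set u : ℕ → X := fun n => T^[n] x0 with hu
  have hstep : ∀ x : X, dist (T x) (T (T x)) ≤ r * dist x (T x) := by
    intro x
    have := h x (T x)
    rw [hr, div_mul_eq_mul_div, le_div_iff₀ h1α]
    nlinarith [dist_nonneg (x := x) (y := T x)]
  have key : ∀ n, dist (u n) (u (n+1)) ≤ dist x0 (T x0) * r ^ n := by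
    intro n
    induction n with
    | zero => simp [hu]
    | succ n ih =>
      have h2 : u (n+1) = T (u n) := by simp [hu, Function.iterate_succ_apply']
      have h3 : u (n+2) = T (T (u n)) := by
        simp [hu, Function.iterate_succ_apply']
      calc dist (u (n+1)) (u (n+2)) = dist (T (u n)) (T (T (u n))) := by rw [h2, h3]
        _ ≤ r * dist (u n) (T (u n)) := hstep _
        _ = r * dist (u n) (u (n+1)) := by rw [h2]
        _ ≤ r * (dist x0 (T x0) * r ^ n) := by
            exact mul_le_mul_of_nonneg_left ih hr0
        _ = dist x0 (T x0) * r ^ (n+1) := by ring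
  have hcauchy : CauchySeq u := cauchySeq_of_le_geometric r _ hr1 key
  obtain ⟨z, hz⟩ := cauchySeq_tendsto_of_complete hcauchy
  have hdiff0 : Filter.Tendsto (fun n => dist (u n) (u (n+1))) Filter.atTop (nhds 0) := by
    have : Filter.Tendsto (fun n => dist x0 (T x0) * r ^ n) Filter.atTop (nhds 0) := by
      simpa using (tendsto_pow_atTop_nhds_zero_of_lt_one hr0 hr1).const_mul (dist x0 (T x0))
    exact squeeze_zero (fun n => dist_nonneg) key this
  have hfix : T z = z := by
    have hd : dist z (T z) ≤ 0 := by
      by_contra hc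
      push_neg at hc
      set D := dist z (T z) with hD
      have hε : 0 < (1 - α) * D / (2 * (1 + α)) := by positivity
      obtain ⟨N1, hN1⟩ := (Metric.tendsto_atTop.1 hz) _ hε
      obtain ⟨N2, hN2⟩ := (Metric.tendsto_atTop.1 hdiff0) _ hε
      set N := max N1 N2
      have e1 : dist (u (N+1)) z < (1 - α) * D / (2 * (1 + α)) :=
        hN1 (N+1) (le_trans (le_max_left _ _) (Nat.le_succ _))
      have e2 : dist (u N) (u (N+1)) < (1 - α) * D / (2 * (1 + α)) := by
        have := hN2 N (le_max_right _ _)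
        rwa [Real.dist_0_eq_abs, abs_of_nonneg dist_nonneg] at this
      have h4 : u (N+1) = T (u N) := by simp [hu, Function.iterate_succ_apply']
      have main : D ≤ dist z (u (N+1)) + α * (dist (u N) (u (N+1)) + D) := by
        calc D ≤ dist z (u (N+1)) + dist (u (N+1)) (T z) := dist_triangle _ _ _
          _ = dist z (u (N+1)) + dist (T (u N)) (T z) := by rw [h4]
          _ ≤ dist z (u (N+1)) + α * (dist (u N) (T (u N)) + dist z (T z)) :=
              add_le_add_right (h (u N) z) _
          _ = dist z (u (N+1)) + α * (dist (u N) (u (N+1)) + D) := by rw [h4, hD]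
      rw [dist_comm z (u (N+1))] at main
      have hα1'' : α ≤ 1 + α := by linarith
      have hεeq : (1 - α) * D / (2 * (1 + α)) * (2 * (1 + α)) = (1 - α) * D :=
        div_mul_cancel₀ _ (by positivity)
      nlinarith [mul_le_mul_of_nonneg_left e2.le hα0, hεeq, mul_pos h1α hc, e1,
        mul_nonneg hα0 (dist_nonneg (x := u N) (y := u (N+1)))]
    have := dist_nonneg (x := z) (y := T z)
    have : dist z (T z) = 0 := le_antisymm hd this
    exact (dist_eq_zero.1 this).symm
  refine ⟨z, hfix, fun y hy => ?_⟩
  have h5 := h y z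
  rw [hy, hfix, dist_self, dist_self] at h5
  simp only [add_zero, mul_zero] at h5
  exact dist_le_zero.1 h5
end

section
/- Let (X,d) be a complete metric space and T : X → X a Chatterjea contraction, i.e. there exists α ∈ [0, 1/2) such that d(Tx,Ty) ≤ α·[d(x,Ty) + d(y,Tx)] for all x, y ∈ X. Then T has a unique fixed point. -/
/-
Along an orbit `xₙ = Tⁿ x`, the Chatterjea condition for the pair `(xₙ, xₙ₊₁)` together with the
triangle inequality gives `d(xₙ₊₁, xₙ₊₂) ≤ α/(1-α) · d(xₙ, xₙ₊₁)`, and `α/(1-α) < 1` since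
`α < 1/2`; so the orbit is Cauchy and converges to some `u`. The condition for the pair `(u, xₙ)`
gives, as `n → ∞`, `d(Tu, u) ≤ α d(u, Tu)`, so `u` is fixed; for two fixed points `u, v` it reads
`d(u, v) ≤ 2α d(u, v)`.
-/

open Filter Topology

def ChatterjeaWith {X : Type*} [PseudoMetricSpace X] (α : ℝ) (T : X → X) : Prop :=
  ∀ x y : X, dist (T x) (T y) ≤ α * (dist x (T y) + dist y (T x))

namespace ChatterjeaWith

section PseudoMetricSpace

variable {X : Type*} [PseudoMetricSpace X] {α : ℝ} {T : X → X}

theorem dist_map_map_le (hT : ChatterjeaWith α T) (hα0 : 0 ≤ α) (hα1 : α < 1) (x : X) :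
    dist (T x) (T (T x)) ≤ α / (1 - α) * dist x (T x) := by
  have hpair := hT x (T x)
  rw [dist_self, add_zero] at hpair
  have htri := mul_le_mul_of_nonneg_left (dist_triangle x (T x) (T (T x))) hα0
  rw [div_mul_eq_mul_div, le_div_iff₀ (by linarith)]
  linarith

theorem dist_iterate_succ_le (hT : ChatterjeaWith α T) (hα0 : 0 ≤ α) (hα1 : α < 1) (x : X)
    (n : ℕ) : dist (T^[n] x) (T^[n + 1] x) ≤ dist x (T x) * (α / (1 - α)) ^ n := by
  induction n with
  | zero => simp
  | succ n ih =>
    have hstep := hT.dist_map_map_le hα0 hα1 (T^[n] x)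
    rw [← Function.iterate_succ_apply' T n x, ← Function.iterate_succ_apply' T (n + 1) x]
      at hstep
    calc dist (T^[n + 1] x) (T^[n + 2] x)
        ≤ α / (1 - α) * dist (T^[n] x) (T^[n + 1] x) := hstep
      _ ≤ α / (1 - α) * (dist x (T x) * (α / (1 - α)) ^ n) := by gcongr
      _ = dist x (T x) * (α / (1 - α)) ^ (n + 1) := by ring

theorem cauchySeq_iterate (hT : ChatterjeaWith α T) (hα0 : 0 ≤ α) (hα1 : α < 1 / 2) (x : X) :
    CauchySeq fun n ↦ T^[n] x :=
  cauchySeq_of_le_geometric _ _ (by rw [div_lt_one (by linarith)]; linarith)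
    (hT.dist_iterate_succ_le hα0 (by linarith) x)

end PseudoMetricSpace

variable {X : Type*} [MetricSpace X] {α : ℝ} {T : X → X}

theorem isFixedPt_of_tendsto_iterate (hT : ChatterjeaWith α T) (hα1 : α < 1) {x u : X}
    (hu : Tendsto (fun n ↦ T^[n] x) atTop (𝓝 u)) : Function.IsFixedPt T u := by
  have hbound : ∀ n, dist (T u) u ≤
      α * (dist u (T^[n + 1] x) + dist (T^[n] x) (T u)) + dist (T^[n + 1] x) u := fun n ↦ by
    have hpair := hT u (T^[n] x)
    rw [← Function.iterate_succ_apply' T n x] at hpair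
    linarith [dist_triangle (T u) (T^[n + 1] x) u]
  have hsucc : Tendsto (fun n ↦ T^[n + 1] x) atTop (𝓝 u) :=
    hu.comp (tendsto_add_atTop_nat 1)
  have hlim : Tendsto
      (fun n ↦ α * (dist u (T^[n + 1] x) + dist (T^[n] x) (T u)) + dist (T^[n + 1] x) u)
      atTop (𝓝 (α * (dist u u + dist u (T u)) + dist u u)) :=
    (tendsto_const_nhds.mul ((tendsto_const_nhds.dist hsucc).add
      (hu.dist tendsto_const_nhds))).add (hsucc.dist tendsto_const_nhds)
  rw [dist_self, zero_add, add_zero] at hlim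
  have hle := le_of_tendsto_of_tendsto' tendsto_const_nhds hlim hbound
  rw [dist_comm u] at hle
  exact dist_le_zero.mp (by nlinarith [dist_nonneg (x := T u) (y := u)])

theorem eq_of_isFixedPt (hT : ChatterjeaWith α T) (hα1 : α < 1 / 2) {u v : X}
    (hu : Function.IsFixedPt T u) (hv : Function.IsFixedPt T v) : u = v := by
  have hpair := hT u v
  rw [hu.eq, hv.eq, dist_comm v u] at hpair
  exact dist_le_zero.mp (by nlinarith [dist_nonneg (x := u) (y := v)])

end ChatterjeaWith

theorem stmt_6 {X : Type*} [MetricSpace X] [CompleteSpace X] [Nonempty X]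
    (T : X → X) (α : ℝ) (hα0 : 0 ≤ α) (hα1 : α < 1 / 2)
    (h : ∀ x y : X, dist (T x) (T y) ≤ α * (dist x (T y) + dist y (T x))) :
    ∃! u : X, T u = u := by
  obtain ⟨x⟩ := ‹Nonempty X›
  have hT : ChatterjeaWith α T := h
  obtain ⟨u, hu⟩ := cauchySeq_tendsto_of_complete (hT.cauchySeq_iterate hα0 hα1 x)
  have hfix : Function.IsFixedPt T u := hT.isFixedPt_of_tendsto_iterate (by linarith) hu
  exact ⟨u, hfix, fun v hv ↦ hT.eq_of_isFixedPt hα1 hv hfix⟩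
end

section
/- Let X = [-1,1] ⊆ ℝ, let G(x,y,z) = |x−y| + |y−z| + |x−z|, and let T : [-1,1] → [-1,1] be defined by T(x) = −(1/2)·x·e^{−1/|x|} for x ∈ (0,1], T(0) = 0, and T(x) = −(1/3)·x·e^{−1/|x|} for x ∈ [−1,0). Then for all x ∈ [0,1] and y ∈ [−1,0], G(Tx,Ty,Ty) ≤ (1/2)·G(x,Tx,Tx) + (1/3)·G(y,Ty,Ty). -/
/-- The G-metric `G(x,y,z) = |x-y| + |y-z| + |x-z|` on `[-1,1] ⊆ ℝ`. -/
noncomputable def Gex (x y z : ℝ) : ℝ := |x - y| + |y - z| + |x - z|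

/-- The map `T` of the example: `T x = -(1/2) x e^{-1/|x|}` for `x ∈ (0,1]`,
`T 0 = 0`, and `T x = -(1/3) x e^{-1/|x|}` for `x ∈ [-1,0)`. -/
noncomputable def Tex (x : ℝ) : ℝ :=
  if 0 < x then -(1 / 2) * x * Real.exp (-1 / |x|)
  else if x < 0 then -(1 / 3) * x * Real.exp (-1 / |x|)
  else 0

/-! `T` maps `[0,1]` into `[-x/2, 0]` and `[-1,0]` into `[0, -y/3]`, because `0 < e^{-1/|x|} ≤ 1`.
With `a = Tx ≤ 0 ≤ b = Ty` every G-value in the inequality is twice a distance, and it reduces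
to the linear inequality `b - a ≤ (x - a)/2 + (b - y)/3`. -/

lemma Gex_right_eq (x y : ℝ) : Gex x y y = 2 * |x - y| := by
  simp only [Gex, sub_self, abs_zero]
  ring

lemma Real.exp_neg_one_div_abs_le_one (x : ℝ) : Real.exp (-1 / |x|) ≤ 1 :=
  Real.exp_le_one_iff.mpr (div_nonpos_of_nonpos_of_nonneg (by norm_num) (abs_nonneg x))

lemma Tex_mem_Icc_of_nonneg {x : ℝ} (hx : 0 ≤ x) : Tex x ∈ Set.Icc (-x / 2) 0 := by
  have he := Real.exp_neg_one_div_abs_le_one x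
  unfold Tex
  split_ifs with hpos hneg
  · have hxe : x * Real.exp (-1 / |x|) ≤ x := mul_le_of_le_one_right hx he
    have hxe_nonneg := mul_nonneg hx (Real.exp_pos (-1 / |x|)).le
    constructor <;> linarith
  · exact absurd hneg hx.not_gt
  · constructor <;> linarith

lemma Tex_mem_Icc_of_nonpos {y : ℝ} (hy : y ≤ 0) : Tex y ∈ Set.Icc 0 (-y / 3) := by
  have he := Real.exp_neg_one_div_abs_le_one y
  unfold Tex
  split_ifs with hpos hneg
  · exact absurd hpos hy.not_gt
  · have hye : -y * Real.exp (-1 / |y|) ≤ -y := mul_le_of_le_one_right (by linarith) he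
    have hye_nonneg := mul_nonneg (neg_nonneg.mpr hy) (Real.exp_pos (-1 / |y|)).le
    constructor <;> linarith
  · constructor <;> linarith

theorem stmt_9 :
    ∀ x ∈ Set.Icc (0 : ℝ) 1, ∀ y ∈ Set.Icc (-1 : ℝ) 0,
      Gex (Tex x) (Tex y) (Tex y) ≤
        (1 / 2) * Gex x (Tex x) (Tex x) + (1 / 3) * Gex y (Tex y) (Tex y) := by
  intro x hx y hy
  obtain ⟨hTx_lower, hTx_nonpos⟩ := Tex_mem_Icc_of_nonneg hx.1
  obtain ⟨hTy_nonneg, hTy_upper⟩ := Tex_mem_Icc_of_nonpos hy.2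
  simp only [Gex_right_eq]
  rw [abs_of_nonpos (by linarith : Tex x - Tex y ≤ 0), abs_of_nonneg (by linarith : 0 ≤ x - Tex x),
    abs_of_nonpos (by linarith : y - Tex y ≤ 0)]
  linarith
end

section
/- Let {A_i}_{i=1}^p be non-empty closed subsets of a G-metric space (X,G) and let T : ⋃_{i=1}^p A_i → ⋃_{i=1}^p A_i be a cyclical operator. Suppose there are an altering distance function φ, a function ψ as below, and constants α, γ with 0 ≤ γ < 1 and 0 < α + γ ≤ 1 such that for every i ∈ {1,…,p}, every x ∈ A_i and every y ∈ A_{i+1}, φ(G(Tx,Ty,Ty)) ≤ φ(α·G(x,Tx,Tx) + γ·G(y,Ty,Ty)) − ψ(G(x,Tx,Tx), G(y,Ty,Ty), G(y,Ty,Ty)). Then for any x₀ ∈ ⋃_{i=1}^p A_i, the Picard iteration x_{n+1} = T x_n satisfies lim_{n→∞} G(x_n, x_{n+1}, x_{n+1}) = 0 and {x_n} is a G-Cauchy sequence. -/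
open Filter Topology
open Fin.NatCast Fin.CommRing

lemma psi_pos' {ψ : ℝ → ℝ → ℝ → ℝ} (hψ : IsPsiFun ψ) {u v : ℝ}
    (hu : 0 ≤ u) (hv : 0 ≤ v) (hne : ¬ (u = 0 ∧ v = 0)) : 0 < ψ u v v := by
  rcases (hψ.nonneg u v v hu hv hv).eq_or_lt with h | h
  · exact absurd ((hψ.eq_zero_iff u v v hu hv hv).mp h.symm) (by tauto)
  · exact h

lemma step_le' {φ : ℝ → ℝ} {ψ : ℝ → ℝ → ℝ → ℝ}
    (hφ : IsAlteringDistance φ) (hψ : IsPsiFun ψ)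
    {α γ : ℝ} (hγ0 : 0 ≤ γ) (hγ1 : γ < 1) (hαγ0 : 0 < α + γ) (hαγ1 : α + γ ≤ 1)
    {u v : ℝ} (hu : 0 ≤ u) (hv : 0 ≤ v)
    (h : φ v ≤ φ (α * u + γ * v) - ψ u v v) : v ≤ u := by
  rcases lt_or_ge (α * u + γ * v) 0 with hneg | hpos
  · nlinarith [mul_nonneg hαγ0.le hu, mul_nonneg hγ0 hu, mul_nonneg hγ0 hv]
  · by_cases h0 : u = 0 ∧ v = 0
    · rw [h0.1, h0.2]
    · have hψpos : 0 < ψ u v v := psi_pos' hψ hu hv h0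
      by_contra hvu
      push_neg at hvu
      have hcb : α * u + γ * v ≤ v := by
        nlinarith [mul_nonneg hu (by linarith : (0:ℝ) ≤ 1 - γ - α),
          mul_nonneg (by linarith : (0:ℝ) ≤ 1 - γ) (by linarith : (0:ℝ) ≤ v - u)]
      have := hφ.mono (Set.mem_Ici.mpr hpos) (Set.mem_Ici.mpr hv) hcb
      linarith

lemma key_le' {φ : ℝ → ℝ} {ψ : ℝ → ℝ → ℝ → ℝ}
    (hφ : IsAlteringDistance φ) (hψ : IsPsiFun ψ)
    {α γ : ℝ} (hγ0 : 0 ≤ γ) (hγ1 : γ < 1) (hαγ0 : 0 < α + γ) (hαγ1 : α + γ ≤ 1)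
    {a b c : ℝ} (ha : 0 ≤ a) (hab : a ≤ b) (hc : 0 ≤ c)
    (h : φ c ≤ φ (α * a + γ * b) - ψ a b b) : c ≤ b := by
  have hb : 0 ≤ b := ha.trans hab
  have hcombo1 : 0 ≤ α * a + γ * b := by
    rcases le_or_gt 0 α with h' | h'
    · nlinarith [mul_nonneg h' ha, mul_nonneg hγ0 hb]
    · nlinarith [mul_le_mul_of_nonpos_left hab h'.le, mul_nonneg hαγ0.le hb]
  have hcombo2 : α * a + γ * b ≤ b := by
    rcases le_or_gt 0 α with h' | h'
    · nlinarith [mul_le_mul_of_nonneg_left hab h',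
        mul_nonneg hb (by linarith : (0:ℝ) ≤ 1 - α - γ)]
    · nlinarith [mul_nonpos_of_nonpos_of_nonneg h'.le ha,
        mul_nonneg hb (by linarith : (0:ℝ) ≤ 1 - γ)]
  rcases eq_or_lt_of_le hb with hb0 | hb0
  · have ha0 : a = 0 := le_antisymm (hab.trans hb0.symm.le) ha
    rw [ha0, ← hb0] at h
    simp only [mul_zero, add_zero] at h
    have hφ0 : φ 0 = 0 := (hφ.eq_zero_iff 0 le_rfl).mpr rfl
    have hψ0 : ψ 0 0 0 = 0 :=
      (hψ.eq_zero_iff 0 0 0 le_rfl le_rfl le_rfl).mpr ⟨rfl, rfl, rfl⟩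
    have h1 : φ c ≤ 0 := by rw [hφ0, hψ0] at h; linarith
    have h2 : φ c = 0 := le_antisymm h1 (hφ.nonneg c hc)
    have := (hφ.eq_zero_iff c hc).mp h2
    linarith [hb0.le, this.le]
  · have hψpos : 0 < ψ a b b := psi_pos' hψ ha hb (by
      intro h0; exact absurd h0.2 (ne_of_gt hb0))
    by_contra hcb
    push_neg at hcb
    have := hφ.mono (Set.mem_Ici.mpr hcombo1) (Set.mem_Ici.mpr hc)
      (hcombo2.trans hcb.le)
    linarith

lemma tendsto_zero' {φ : ℝ → ℝ} {ψ : ℝ → ℝ → ℝ → ℝ}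
    (hφ : IsAlteringDistance φ) (hψ : IsPsiFun ψ)
    {α γ : ℝ} (hγ0 : 0 ≤ γ) (hγ1 : γ < 1) (hαγ0 : 0 < α + γ) (hαγ1 : α + γ ≤ 1)
    {d : ℕ → ℝ} (hd0 : ∀ n, 0 ≤ d n)
    (hstep : ∀ n, φ (d (n+1)) ≤ φ (α * d n + γ * d (n+1)) - ψ (d n) (d (n+1)) (d (n+1))) :
    Antitone d ∧ Tendsto d atTop (nhds 0) := by
  have hmono : ∀ n, d (n+1) ≤ d n := fun n =>
    step_le' hφ hψ hγ0 hγ1 hαγ0 hαγ1 (hd0 n) (hd0 (n+1)) (hstep n)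
  have hant : Antitone d := antitone_nat_of_succ_le hmono
  refine ⟨hant, ?_⟩
  have hbdd : BddBelow (Set.range d) := ⟨0, by rintro y ⟨n, rfl⟩; exact hd0 n⟩
  set r := ⨅ n, d n with hr
  have htend : Tendsto d atTop (nhds r) := tendsto_atTop_ciInf hant hbdd
  have hr0 : 0 ≤ r := le_ciInf hd0
  suffices hrz : r = 0 by rwa [hrz] at htend
  by_cases hgood : ∃ N, ∀ n ≥ N, 0 ≤ α * d n + γ * d (n+1)
  · obtain ⟨N, hN⟩ := hgood
    have ht1 : Tendsto (fun n => d (n+1)) atTop (nhds r) :=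
      htend.comp (tendsto_add_atTop_nat 1)
    have hcombo : Tendsto (fun n => α * d n + γ * d (n+1)) atTop (nhds (α * r + γ * r)) :=
      (htend.const_mul α).add (ht1.const_mul γ)
    have hc0 : 0 ≤ α * r + γ * r := by nlinarith [mul_nonneg hαγ0.le hr0]
    have hφ1 : Tendsto (fun n => φ (d (n+1))) atTop (nhds (φ r)) :=
      (hφ.continuous r (Set.mem_Ici.mpr hr0)).tendsto.comp
        (tendsto_nhdsWithin_iff.mpr ⟨ht1, Eventually.of_forall fun n => Set.mem_Ici.mpr (hd0 (n+1))⟩)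
    have hφ2 : Tendsto (fun n => φ (α * d n + γ * d (n+1))) atTop (nhds (φ (α * r + γ * r))) :=
      (hφ.continuous _ (Set.mem_Ici.mpr hc0)).tendsto.comp
        (tendsto_nhdsWithin_iff.mpr ⟨hcombo,
          eventually_atTop.mpr ⟨N, fun n hn => Set.mem_Ici.mpr (hN n hn)⟩⟩)
    have hψt : Tendsto (fun n => ψ (d n) (d (n+1)) (d (n+1))) atTop (nhds (ψ r r r)) := by
      have hprod : Tendsto (fun n => ((d n, (d (n+1), d (n+1))) : ℝ × ℝ × ℝ)) atTop
          (nhds (r, (r, r))) := htend.prodMk_nhds (ht1.prodMk_nhds ht1)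
      have hmemr : ((r, (r, r)) : ℝ × ℝ × ℝ) ∈
          (Set.Ici 0 ×ˢ Set.Ici 0 ×ˢ Set.Ici 0 : Set (ℝ × ℝ × ℝ)) :=
        ⟨Set.mem_Ici.mpr hr0, Set.mem_Ici.mpr hr0, Set.mem_Ici.mpr hr0⟩
      exact (hψ.continuous _ hmemr).tendsto.comp
        (tendsto_nhdsWithin_iff.mpr ⟨hprod, Eventually.of_forall fun n =>
          ⟨Set.mem_Ici.mpr (hd0 n), Set.mem_Ici.mpr (hd0 (n+1)), Set.mem_Ici.mpr (hd0 (n+1))⟩⟩)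
    have hle : φ r ≤ φ (α * r + γ * r) - ψ r r r :=
      le_of_tendsto_of_tendsto' hφ1 (hφ2.sub hψt) hstep
    have h2 : φ (α * r + γ * r) ≤ φ r :=
      hφ.mono (Set.mem_Ici.mpr hc0) (Set.mem_Ici.mpr hr0)
        (by nlinarith [mul_nonneg hr0 (by linarith : (0:ℝ) ≤ 1 - α - γ)])
    have hψr : ψ r r r = 0 := le_antisymm (by linarith) (hψ.nonneg r r r hr0 hr0 hr0)
    exact ((hψ.eq_zero_iff r r r hr0 hr0 hr0).mp hψr).1
  · push_neg at hgood
    by_contra hrne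
    have hrpos : 0 < r := hr0.lt_of_ne (Ne.symm hrne)
    obtain ⟨n₀, -, hn₀⟩ := hgood 0
    have hα : α < 0 := by
      rcases lt_or_ge α 0 with h | h
      · exact h
      · exfalso; nlinarith [mul_nonneg h (hd0 n₀), mul_nonneg hγ0 (hd0 (n₀+1))]
    set δ := ((α + γ) * r) / (-α * 2) with hδ
    have hδpos : 0 < δ := div_pos (mul_pos hαγ0 hrpos) (by linarith)
    have hδeq : (-α) * δ * 2 = (α + γ) * r := by
      have hα' : α ≠ 0 := ne_of_lt hα
      rw [hδ]; field_simp
    have hev : ∀ᶠ j in atTop, d j < r + δ :=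
      htend.eventually_lt_const (by linarith : r < r + δ)
    obtain ⟨N, hN⟩ := eventually_atTop.mp hev
    obtain ⟨n, hnN, hcombo⟩ := hgood N
    have h1 : r ≤ d (n+1) := ciInf_le hbdd (n+1)
    have h2 : d n < r + δ := hN n hnN
    linarith [mul_nonneg hγ0 (sub_nonneg.mpr h1),
      mul_pos (neg_pos.mpr hα) (show (0:ℝ) < r + δ - d n by linarith),
      mul_pos hαγ0 hrpos, hδeq, hcombo]

theorem stmt_15 {X : Type*} (G : X → X → X → ℝ) (hG : IsGMetric G)
    (p : ℕ) [NeZero p] (A : Fin p → Set X)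
    (hne : ∀ i, (A i).Nonempty) (hcl : ∀ i, GClosed G (A i))
    (T : X → X) (hcyc : ∀ i : Fin p, ∀ x ∈ A i, T x ∈ A (i + 1))
    (φ : ℝ → ℝ) (ψ : ℝ → ℝ → ℝ → ℝ)
    (hφ : IsAlteringDistance φ) (hψ : IsPsiFun ψ)
    (α γ : ℝ) (hγ0 : 0 ≤ γ) (hγ1 : γ < 1) (hαγ0 : 0 < α + γ) (hαγ1 : α + γ ≤ 1)
    (hcontr : ∀ i : Fin p, ∀ x ∈ A i, ∀ y ∈ A (i + 1),
      φ (G (T x) (T y) (T y)) ≤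
        φ (α * G x (T x) (T x) + γ * G y (T y) (T y)) -
          ψ (G x (T x) (T x)) (G y (T y) (T y)) (G y (T y) (T y))) :
    ∀ x₀ ∈ ⋃ i, A i,
      Filter.Tendsto (fun n => G (T^[n] x₀) (T^[n + 1] x₀) (T^[n + 1] x₀))
        Filter.atTop (nhds 0) ∧
      GCauchySeq G (fun n => T^[n] x₀) := by
  intro x₀ hx₀
  rw [Set.mem_iUnion] at hx₀
  obtain ⟨i₀, hi₀⟩ := hx₀
  have hp : 0 < p := Nat.pos_of_ne_zero (NeZero.ne p)
  set x : ℕ → X := fun n => T^[n] x₀ with hxdef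
  set d : ℕ → ℝ := fun n => G (x n) (x (n+1)) (x (n+1)) with hddef
  have hxs : ∀ n, x (n+1) = T (x n) := fun n => Function.iterate_succ_apply' T n x₀
  have hd0 : ∀ n, 0 ≤ d n := fun n => hG.nonneg _ _ _
  -- membership of orbit
  have hmem : ∀ n : ℕ, x n ∈ A (i₀ + (n : Fin p)) := by
    intro n
    induction n with
    | zero => simp only [Nat.cast_zero, add_zero]; exact hi₀
    | succ n ih =>
      have hidx : (i₀ + ((n+1 : ℕ) : Fin p)) = (i₀ + (n : Fin p)) + 1 := by
        push_cast; ring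
      rw [hidx, hxs n]
      exact hcyc _ _ ih
  -- the contraction along the orbit for congruent pairs
  have hC : ∀ a b : ℕ, ((b : Fin p) = (a : Fin p) + 1) →
      φ (G (x (a+1)) (x (b+1)) (x (b+1))) ≤
        φ (α * d a + γ * d b) - ψ (d a) (d b) (d b) := by
    intro a b hab
    have hb' : x b ∈ A ((i₀ + (a : Fin p)) + 1) := by
      have h := hmem b
      rwa [hab, ← add_assoc] at h
    have h := hcontr (i₀ + (a : Fin p)) (x a) (hmem a) (x b) hb'
    rw [show T (x a) = x (a+1) from (hxs a).symm,
        show T (x b) = x (b+1) from (hxs b).symm] at h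
    exact h
  have hstep : ∀ n, φ (d (n+1)) ≤ φ (α * d n + γ * d (n+1)) -
      ψ (d n) (d (n+1)) (d (n+1)) := by
    intro n
    exact hC n (n+1) (by push_cast; ring)
  obtain ⟨hant, htend⟩ := tendsto_zero' hφ hψ hγ0 hγ1 hαγ0 hαγ1 hd0 hstep
  -- key cross-pair bound
  have hkey : ∀ a b : ℕ, b ≤ a → ((b : Fin p) = (a : Fin p) + 1) →
      G (x (a+1)) (x (b+1)) (x (b+1)) ≤ d b := by
    intro a b hba hab
    exact key_le' hφ hψ hγ0 hγ1 hαγ0 hαγ1 (hd0 a) (hant hba) (hG.nonneg _ _ _) (hC a b hab)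
  -- chain bound
  have hchain : ∀ t m : ℕ, G (x m) (x (m + t)) (x (m + t)) ≤ t * d m := by
    intro t
    induction t with
    | zero => intro m; simpa using (hG.eq_zero (x m)).le
    | succ t ih =>
      intro m
      have h1 : G (x m) (x (m+t+1)) (x (m+t+1)) ≤
          d m + G (x (m+1)) (x (m+t+1)) (x (m+t+1)) :=
        hG.rectangle (x m) (x (m+t+1)) (x (m+t+1)) (x (m+1))
      have h2 := ih (m+1)
      rw [show m + 1 + t = m + t + 1 by omega] at h2
      have h3 : (t : ℝ) * d (m+1) ≤ (t : ℝ) * d m :=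
        mul_le_mul_of_nonneg_left (hant (Nat.le_succ m)) (Nat.cast_nonneg t)
      have : G (x m) (x (m+t+1)) (x (m+t+1)) ≤ ((t:ℝ) + 1) * d m := by linarith
      rw [show m + (t+1) = m + t + 1 by omega]
      push_cast
      exact this
  -- symmetrization
  have hsym2 : ∀ u v : X, G v u u ≤ 2 * G u v v := by
    intro u v
    have h1 : G v u u = G u u v := by rw [hG.symm_left v u u, hG.symm_right u v u]
    have h2 := hG.rectangle u u v v
    have h3 : G v u v = G u v v := hG.symm_left v u v
    linarith [h1.le, h2, h3.le]
  -- cast helper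
  have hcast : ∀ b t : ℕ, ((b + p * t : ℕ) : Fin p) = (b : Fin p) := by
    intro b t
    push_cast
    simp [Fin.natCast_self]
  -- window
  have hwin : ∀ q : ℕ, ∃ t, q ≤ p * t ∧ p * t ≤ q + p := by
    intro q
    refine ⟨q / p + 1, ?_, ?_⟩
    · have h1 := Nat.div_add_mod q p
      have h2 : q % p < p := Nat.mod_lt _ hp
      calc q = p * (q / p) + q % p := h1.symm
        _ ≤ p * (q / p) + p := Nat.add_le_add_left h2.le _
        _ = p * (q / p + 1) := by ring
    · have h1 : p * (q / p) ≤ q := Nat.mul_div_le q p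
      calc p * (q / p + 1) = p * (q / p) + p := by ring
        _ ≤ q + p := Nat.add_le_add_right h1 p
  -- pair bound for 1 ≤ n ≤ m
  have hpair : ∀ n m : ℕ, 1 ≤ n → n ≤ m →
      G (x n) (x m) (x m) ≤ 2 * d (n-1) + 2 * (((p:ℝ)+1) * d m) := by
    intro n m hn hnm
    obtain ⟨t, ht1, ht2⟩ := hwin (m + 2 - n)
    have hs : ∃ s, p * t = s := ⟨_, rfl⟩
    obtain ⟨s, hseq⟩ := hs
    rw [hseq] at ht1 ht2
    set a := n + s - 2 with hadef
    have hma : m ≤ a := by omega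
    have ha2 : a ≤ m + p := by omega
    have hba : (n - 1) ≤ a := by omega
    have hdvd : (((n - 1 : ℕ)) : Fin p) = (a : Fin p) + 1 := by
      have he : a + 1 = (n - 1) + p * t := by omega
      have hcc : ((a + 1 : ℕ) : Fin p) = (((n-1) + p * t : ℕ) : Fin p) := by rw [he]
      rw [hcast (n-1) t] at hcc
      rw [Nat.cast_add, Nat.cast_one] at hcc
      exact hcc.symm
    have hk := hkey a (n-1) hba hdvd
    rw [show n - 1 + 1 = n by omega] at hk
    have h1 : G (x n) (x (a+1)) (x (a+1)) ≤ 2 * d (n-1) :=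
      le_trans (hsym2 (x (a+1)) (x n)) (by linarith)
    have hchain1 : G (x m) (x (a+1)) (x (a+1)) ≤ ((a+1-m : ℕ) : ℝ) * d m := by
      have h := hchain (a+1-m) m
      rwa [show m + (a+1-m) = a+1 by omega] at h
    have hcount : ((a+1-m : ℕ) : ℝ) ≤ (p:ℝ) + 1 := by
      have h : a + 1 - m ≤ p + 1 := by omega
      exact_mod_cast h
    have h2 : G (x (a+1)) (x m) (x m) ≤ 2 * (((p:ℝ)+1) * d m) := by
      have h3 := hsym2 (x m) (x (a+1))
      have h4 : G (x m) (x (a+1)) (x (a+1)) ≤ ((p:ℝ)+1) * d m :=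
        le_trans hchain1 (mul_le_mul_of_nonneg_right hcount (hd0 m))
      linarith
    have hrect := hG.rectangle (x n) (x m) (x m) (x (a+1))
    linarith
  refine ⟨htend, ?_⟩
  -- Cauchy
  intro ε hε
  set ε' : ℝ := ε / (8*(p:ℝ) + 17) with hε'def
  have hp' : (0:ℝ) < 8*(p:ℝ) + 17 := by positivity
  have hε'pos : 0 < ε' := div_pos hε hp'
  have hev : ∀ᶠ j in Filter.atTop, d j < ε' := htend.eventually_lt_const hε'pos
  obtain ⟨N, hN⟩ := Filter.eventually_atTop.mp hev
  refine ⟨N + 1, ?_⟩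
  have hDD : ∀ n m, N + 1 ≤ n → N + 1 ≤ m →
      G (x n) (x m) (x m) < 2 * ((2*(p:ℝ)+4) * ε') := by
    have hB : ∀ n m, N + 1 ≤ n → n ≤ m →
        G (x n) (x m) (x m) < (2*(p:ℝ)+4) * ε' := by
      intro n m hn hnm
      have h1 := hpair n m (by omega) hnm
      have h2 : d (n-1) < ε' := hN (n-1) (by omega)
      have h3 : d m < ε' := hN m (by omega)
      have h4 : ((p:ℝ)+1) * d m ≤ ((p:ℝ)+1) * ε' := by nlinarith [Nat.cast_nonneg (α := ℝ) p]
      nlinarith [Nat.cast_nonneg (α := ℝ) p]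
    intro n m hn hm
    rcases le_or_gt n m with h | h
    · have := hB n m hn h
      nlinarith [hG.nonneg (x n) (x m) (x m), mul_pos (show (0:ℝ) < 2*(p:ℝ)+4 by positivity) hε'pos]
    · have h5 := hB m n hm h.le
      have h6 := hsym2 (x m) (x n)
      -- h6 : G (x n) (x m) (x m) ≤ 2 * G (x m) (x n) (x n)
      nlinarith
  intro n hn m hm l hl
  have hrect := hG.rectangle (x n) (x m) (x l) (x m)
  -- G (x n) (x m) (x l) ≤ G (x n) (x m) (x m) + G (x m) (x m) (x l)
  have heq : G (x m) (x m) (x l) = G (x l) (x m) (x m) := by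
    rw [hG.symm_right (x m) (x m) (x l), hG.symm_left (x m) (x l) (x m)]
  have hA := hDD n m hn hm
  have hB := hDD l m hl hm
  have hfin : G (x n) (x m) (x l) < 4 * ((2*(p:ℝ)+4) * ε') := by
    rw [heq] at hrect
    nlinarith
  have : 4 * ((2*(p:ℝ)+4) * ε') ≤ ε := by
    rw [hε'def]
    have h8 : 4 * ((2*(p:ℝ)+4) * (ε / (8*(p:ℝ)+17))) = ε * ((8*(p:ℝ)+16) / (8*(p:ℝ)+17)) := by
      field_simp; ring
    rw [h8]
    have h9 : (8*(p:ℝ)+16) / (8*(p:ℝ)+17) ≤ 1 := (div_le_one hp').mpr (by linarith)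
    nlinarith [hε.le]
  linarith
end
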